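/- arXiv:1902.08812 — 10 statements merged into one kernel-verified Lean document; each statement's English description precedes it below -/
import Mathlib

section
/- If φ : Z/nZ → {±1} is a binary sequence and φ' its expansion (the concatenation of φ and -φ), then R_{φ'}(w) = 0 for all 0 < w < 2n if and only if n = 2 or n = 1 (i.e., no generalized perfect binary sequence of length n > 2 exists). -/
/-!
Since `φ'(k + n) = -φ'(k)`, the autocorrelation of `φ'` at a shift `w < n` is twice the negacyclic
autocorrelation `C(w) = ∑_{i<n} φ'(i) φ'(i + w)`. Modulo 4 every product of two signs satisfies
`x y = x + y - 1`, and the window sums `∑_{i<n} φ'(i + w)` grow by `2` (mod 4) at each step of `w`,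
which gives `C(w) ≡ n + 2w (mod 4)`. For `n ≥ 3` one of `w = 1, 2` makes this nonzero.
-/

open Finset

theorem ZMod.sum_univ_eq_sum_range {M : Type*} [AddCommMonoid M] (m : ℕ) [NeZero m]
    (f : ZMod m → M) : ∑ k, f k = ∑ i ∈ range m, f i := by
  refine sum_nbij' ZMod.val (↑) ?_ ?_ ?_ ?_ ?_
  · simp [ZMod.val_lt]
  · simp
  · simp
  · intro i hi
    exact ZMod.val_natCast_of_lt (mem_range.mp hi)
  · simp

def autocorrelation {m : ℕ} [NeZero m] (ψ : ZMod m → ℤ) (w : ZMod m) : ℤ :=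
  ∑ k, ψ k * ψ (k + w)

def expansion (n : ℕ) (φ : ZMod n → ℤ) (k : ZMod (2 * n)) : ℤ :=
  (if k.val < n then 1 else -1) * φ (k.val : ZMod n)

section ZModFour

variable {x y : ZMod 4}

theorem ZMod.four_mul_eq_add_sub_one (hx : x = 1 ∨ x = -1) (hy : y = 1 ∨ y = -1) :
    x * y = x + y - 1 := by
  rcases hx with rfl | rfl <;> rcases hy with rfl | rfl <;> decide

theorem ZMod.four_two_mul_eq_two (hx : x = 1 ∨ x = -1) : 2 * x = 2 := by
  rcases hx with rfl | rfl <;> decide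

end ZModFour

namespace Function.Antiperiodic

variable {n : ℕ} {χ : ℕ → ZMod 4}

theorem sum_range_add_eq (hanti : Antiperiodic χ n) (hχ : ∀ i, χ i = 1 ∨ χ i = -1) (w : ℕ) :
    ∑ i ∈ range n, χ (i + w) = ∑ i ∈ range n, χ i + 2 * w := by
  induction w with
  | zero => simp
  | succ w ih =>
    have hstep :
        ∑ i ∈ range n, χ (i + (w + 1)) = ∑ i ∈ range n, χ (i + w) + χ (w + n) - χ w := by
      have h := sum_range_succ' (fun i => χ (i + w)) n
      rw [sum_range_succ] at h
      simp only [add_right_comm _ 1 w, zero_add, ← add_assoc, add_comm n w] at h ⊢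
      linear_combination -h
    have h4 : (4 : ZMod 4) = 0 := rfl
    rw [hstep, ih, hanti]
    push_cast
    linear_combination -ZMod.four_two_mul_eq_two (hχ w) - h4

theorem sum_range_mul_add_eq (hanti : Antiperiodic χ n) (hχ : ∀ i, χ i = 1 ∨ χ i = -1)
    (w : ℕ) : ∑ i ∈ range n, χ i * χ (i + w) = n + 2 * w := by
  have htwice : 2 * ∑ i ∈ range n, χ i = 2 * n := by
    rw [mul_sum, sum_congr rfl fun i _ => ZMod.four_two_mul_eq_two (hχ i)]
    simp [mul_comm]
  rw [sum_congr rfl fun i _ => ZMod.four_mul_eq_add_sub_one (hχ i) (hχ (i + w)),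
    sum_sub_distrib, sum_add_distrib, hanti.sum_range_add_eq hχ]
  simp only [sum_const, card_range, nsmul_eq_mul, mul_one]
  linear_combination htwice

end Function.Antiperiodic

section Expansion

variable {n : ℕ} {φ : ZMod n → ℤ}

theorem expansion_eq_one_or_neg_one (hφ : ∀ k, φ k = 1 ∨ φ k = -1) (k : ZMod (2 * n)) :
    expansion n φ k = 1 ∨ expansion n φ k = -1 := by
  unfold expansion
  rcases hφ (k.val : ZMod n) with h | h <;> rw [h] <;> split_ifs <;> simp

theorem expansion_natCast_antiperiodic [NeZero n] :
    Function.Antiperiodic (fun i : ℕ => expansion n φ i) n := by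
  intro i
  have hn := NeZero.pos n
  have hφ : (((i + n) % (2 * n) : ℕ) : ZMod n) = ((i % (2 * n) : ℕ) : ZMod n) := by
    rw [ZMod.natCast_eq_natCast_iff', Nat.mod_mod_of_dvd _ (dvd_mul_left n 2),
      Nat.mod_mod_of_dvd _ (dvd_mul_left n 2), Nat.add_mod_right]
  have hsign : (i + n) % (2 * n) < n ↔ ¬ i % (2 * n) < n := by
    have := Nat.mod_lt i (by omega : 0 < 2 * n)
    rw [Nat.add_mod_eq_ite, Nat.mod_eq_of_lt (by omega : n < 2 * n)]
    split_ifs <;> omega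
  simp only [expansion]
  rw [ZMod.val_natCast, ZMod.val_natCast, hφ]
  by_cases h : i % (2 * n) < n <;> simp [h, hsign]

end Expansion

theorem autocorrelation_natCast_eq_two_mul_sum {n : ℕ} [NeZero n] {ψ : ZMod (2 * n) → ℤ}
    (hψ : Function.Antiperiodic (fun i : ℕ => ψ i) n) (w : ℕ) :
    autocorrelation ψ w = 2 * ∑ i ∈ range n, ψ i * ψ ↑(i + w) := by
  have hsplit := sum_range_add (fun i => ψ i * ψ ↑(i + w)) n n
  rw [← two_mul] at hsplit
  have hsecond :
      ∑ i ∈ range n, ψ ↑(n + i) * ψ ↑(n + i + w) = ∑ i ∈ range n, ψ i * ψ ↑(i + w) := by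
    refine sum_congr rfl fun i _ => ?_
    rw [add_comm n i, add_right_comm]
    simp only [hψ i, hψ (i + w), neg_mul_neg]
  unfold autocorrelation
  rw [ZMod.sum_univ_eq_sum_range]
  simp only [← Nat.cast_add]
  rw [hsplit, hsecond]
  ring

theorem exists_lt_natCast_add_two_mul_ne_zero {n : ℕ} (hn : 3 ≤ n) :
    ∃ w, 0 < w ∧ w < n ∧ (n + 2 * w : ZMod 4) ≠ 0 := by
  by_cases h : (n : ZMod 4) = 0
  · exact ⟨1, by omega, by omega, by rw [h]; decide⟩
  · refine ⟨2, by omega, by omega, ?_⟩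
    rwa [Nat.cast_ofNat, show (2 * 2 : ZMod 4) = 0 from rfl, add_zero]

theorem ZMod.natCast_ne_zero_and_ne_of_lt {n w : ℕ} (hw0 : 0 < w) (hwn : w < n) :
    (w : ZMod (2 * n)) ≠ 0 ∧ (w : ZMod (2 * n)) ≠ n := by
  rw [Ne, ZMod.natCast_eq_zero_iff, Ne, ZMod.natCast_eq_natCast_iff',
    Nat.mod_eq_of_lt (by omega : w < 2 * n), Nat.mod_eq_of_lt (by omega : n < 2 * n)]
  exact ⟨fun h => absurd (Nat.le_of_dvd hw0 h) (by omega), hwn.ne⟩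

theorem exists_autocorrelation_expansion_ne_zero {n : ℕ} [NeZero n] (hn : 3 ≤ n)
    {φ : ZMod n → ℤ} (hφ : ∀ k, φ k = 1 ∨ φ k = -1) :
    ∃ w : ZMod (2 * n), w ≠ 0 ∧ w ≠ n ∧ autocorrelation (expansion n φ) w ≠ 0 := by
  obtain ⟨w, hw0, hwn, hw4⟩ := exists_lt_natCast_add_two_mul_ne_zero hn
  obtain ⟨hw0', hwn'⟩ := ZMod.natCast_ne_zero_and_ne_of_lt hw0 hwn
  refine ⟨w, hw0', hwn', fun hR => hw4 ?_⟩
  have hanti := expansion_natCast_antiperiodic (φ := φ)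
  rw [autocorrelation_natCast_eq_two_mul_sum hanti, mul_eq_zero, or_iff_right two_ne_zero] at hR
  have hχ : Function.Antiperiodic (fun i : ℕ => (expansion n φ i : ZMod 4)) n := fun i => by
    simp only [hanti i, Int.cast_neg]
  rw [← hχ.sum_range_mul_add_eq (fun i => by
    rcases expansion_eq_one_or_neg_one hφ (i : ZMod (2 * n)) with h | h <;> simp [h]) w]
  exact_mod_cast congrArg (Int.cast : ℤ → ZMod 4) hR

theorem autocorrelation_expansion_two_eq_zero (φ : ZMod 2 → ℤ) {w : ZMod (2 * 2)}
    (hw0 : w ≠ 0) (hw2 : w ≠ 2) : autocorrelation (expansion 2 φ) w = 0 := by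
  have hanti := expansion_natCast_antiperiodic (φ := φ)
  have h2 := hanti 0
  have h3 := hanti 1
  have h4 := hanti 2
  obtain ⟨m, hm, rfl⟩ : ∃ m : ℕ, m < 4 ∧ w = m := ⟨w.val, w.val_lt, (ZMod.natCast_zmod_val w).symm⟩
  rw [autocorrelation_natCast_eq_two_mul_sum hanti]
  interval_cases m
  · exact absurd rfl hw0
  · norm_num [sum_range_succ] at h2 ⊢
    rw [h2]
    ring
  · exact absurd rfl hw2
  · norm_num [sum_range_succ] at h2 h3 h4 ⊢
    rw [h3, h4, h2]
    ring

theorem stmt_2_general (n : ℕ) [NeZero n]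
    (φ : ZMod n → ℤ) (hφ : ∀ k, φ k = 1 ∨ φ k = -1)
    (φ' : ZMod (2 * n) → ℤ)
    (hexp : ∀ k : ZMod (2 * n),
      φ' k = (if k.val < n then (1 : ℤ) else -1) * φ ((k.val : ZMod n))) :
    (∀ w : ZMod (2 * n), w ≠ 0 → w ≠ (n : ZMod (2 * n)) →
        ∑ k : ZMod (2 * n), φ' k * φ' (k + w) = 0) ↔ (n = 2 ∨ n = 1) := by
  obtain rfl : φ' = expansion n φ := funext hexp
  change (∀ w, w ≠ 0 → w ≠ (n : ZMod (2 * n)) → autocorrelation (expansion n φ) w = 0) ↔ _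
  constructor
  · intro H
    by_contra hn
    obtain ⟨w, hw0, hwn, hR⟩ :=
      exists_autocorrelation_expansion_ne_zero (by have := NeZero.ne n; omega) hφ
    exact hR (H w hw0 hwn)
  · rintro (rfl | rfl) w hw0 hwn
    · exact autocorrelation_expansion_two_eq_zero φ hw0 hwn
    · obtain rfl | rfl : w = 0 ∨ w = ((1 : ℕ) : ZMod (2 * 1)) := by revert w; decide
      exacts [absurd rfl hw0, absurd rfl hwn]

/-- a ±1 sequence `φ` of length `n` is a generalized perfect binary
sequence (the expansion `φ'` has zero autocorrelation at every shift `w` with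
`0 < w < 2n`, other than the forbidden shift `w = n`) if and only if `n = 2` or
`n = 1`; i.e. no generalized perfect binary sequence of length `n > 2` exists. -/
theorem stmt_2 (n : ℕ) [NeZero n] [NeZero (2 * n)]
    (φ : ZMod n → ℤ) (hφ : ∀ k, φ k = 1 ∨ φ k = -1)
    (φ' : ZMod (2 * n) → ℤ)
    (hexp : ∀ k : ZMod (2 * n),
      φ' k = (if k.val < n then (1 : ℤ) else -1) * φ ((k.val : ZMod n))) :
    (∀ w : ZMod (2 * n), w ≠ 0 → w ≠ (n : ZMod (2 * n)) →
        ∑ k : ZMod (2 * n), φ' k * φ' (k + w) = 0) ↔ (n = 2 ∨ n = 1) :=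
  stmt_2_general n φ hφ φ' hexp
end

section
/- Let G be a finite group of order 4t+2 > 2 and ψ : G × G → {±1} a normalized 2-cocycle (ψ(1,1)=1 and ψ(g,h)ψ(gh,k)=ψ(g,hk)ψ(h,k) for all g,h,k). Then the row excess of the matrix M_ψ = [ψ(g,h)]_{g,h∈G}, defined as Σ_{g≠1} |Σ_{h∈G} ψ(g,h)|, is at least 4t. -/
/-- the row excess of a cocyclic matrix over a group of order
`4t + 2 > 2` is at least `4t`. -/
theorem stmt_3 (t : ℕ) (ht : 1 ≤ t) (G : Type*) [Group G] [Fintype G] [DecidableEq G]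
    (hG : Fintype.card G = 4 * t + 2)
    (ψ : G → G → ℤ) (hval : ∀ g h, ψ g h = 1 ∨ ψ g h = -1)
    (hnorm : ψ 1 1 = 1)
    (hcoc : ∀ g h k, ψ g h * ψ (g * h) k = ψ g (h * k) * ψ h k) :
    (4 * t : ℤ) ≤ ∑ g ∈ Finset.univ.erase (1 : G), |∑ h : G, ψ g h| := by
  classical
  set S : G → ℤ := fun g => ∑ h : G, ψ g h with hSdef
  -- first row is all ones
  have hone : ∀ k : G, ψ 1 k = 1 := by
    intro k
    have h := hcoc 1 1 k
    simp only [hnorm, one_mul, mul_one] at h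
    rcases hval 1 k with h1 | h1 <;> rw [h1] at h <;> norm_num at h
    simp [h1, h]
  have hS1 : S 1 = 4 * t + 2 := by
    simp [hSdef, hone, hG]
  -- every row sum is even
  have heven : ∀ g : G, (2:ℤ) ∣ S g := by
    intro g
    have h1 : (2:ℤ) ∣ ∑ h : G, (ψ g h - 1) :=
      Finset.dvd_sum fun h _ => by rcases hval g h with h' | h' <;> simp [h']
    have h2 : ∑ h : G, (ψ g h - 1) = S g - (4 * t + 2) := by
      rw [Finset.sum_sub_distrib]
      simp [hSdef, hG]
    rw [h2] at h1
    omega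
  -- key congruence : S (g*h) ≡ S g + S h + 2 [4]
  have key : ∀ g h : G, (4:ℤ) ∣ S (g * h) - S g - S h - 2 := by
    intro g h
    have hprod : ∑ k : G, ψ g (h * k) * ψ h k = ψ g h * S (g * h) := by
      rw [hSdef, Finset.mul_sum]
      exact Finset.sum_congr rfl fun k _ => (hcoc g h k).symm
    have hre : ∑ k : G, ψ g (h * k) = S g := by
      simpa using Equiv.sum_comp (Equiv.mulLeft h) (ψ g)
    have hterm : ∀ k : G, (4:ℤ) ∣ (ψ g (h * k) - 1) * (ψ h k - 1) := by
      intro k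
      rcases hval g (h * k) with h1 | h1 <;> rcases hval h k with h2 | h2 <;>
        simp [h1, h2]
    have hsum := Finset.dvd_sum fun k (_ : k ∈ Finset.univ) => hterm k
    have hexp : ∑ k : G, (ψ g (h * k) - 1) * (ψ h k - 1)
        = (∑ k : G, ψ g (h * k) * ψ h k) - (∑ k : G, ψ g (h * k))
          - (∑ k : G, ψ h k) + (4 * t + 2) := by
      have : ∀ k : G, (ψ g (h * k) - 1) * (ψ h k - 1)
          = ψ g (h * k) * ψ h k - ψ g (h * k) - ψ h k + 1 := fun k => by ring
      rw [Finset.sum_congr rfl fun k _ => this k]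
      rw [Finset.sum_add_distrib, Finset.sum_sub_distrib, Finset.sum_sub_distrib]
      simp [hG]
    rw [hexp, hprod, hre] at hsum
    have hSh : (∑ k : G, ψ h k) = S h := rfl
    rw [hSh] at hsum
    have he := heven (g * h)
    rcases hval g h with h1 | h1 <;> rw [h1] at hsum <;> omega
  -- the set of rows with S ≡ 2 mod 4
  set A : Finset G := Finset.univ.filter (fun g => (4:ℤ) ∣ S g - 2) with hAdef
  have h1A : (1:G) ∈ A := by
    simp only [hAdef, Finset.mem_filter, Finset.mem_univ, true_and, hS1]
    omega
  have hcardA : 2 * t + 1 ≤ A.card := by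
    by_cases hall : ∀ g : G, (4:ℤ) ∣ S g - 2
    · have : A = Finset.univ := by
        ext g; simp [hAdef, hall g]
      rw [this, Finset.card_univ, hG]; omega
    · push_neg at hall
      obtain ⟨g₀, hg₀⟩ := hall
      have hg₀4 : (4:ℤ) ∣ S g₀ := by have := heven g₀; omega
      have hmaps : ∀ g ∈ Finset.univ.filter (fun g => ¬ (4:ℤ) ∣ S g - 2),
          g₀ * g ∈ A := by
        intro g hg
        simp only [Finset.mem_filter, Finset.mem_univ, true_and] at hg
        simp only [hAdef, Finset.mem_filter, Finset.mem_univ, true_and]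
        have hg4 : (4:ℤ) ∣ S g := by have := heven g; omega
        have := key g₀ g
        omega
      have hle : (Finset.univ.filter (fun g => ¬ (4:ℤ) ∣ S g - 2)).card ≤ A.card :=
        Finset.card_le_card_of_injOn (fun g => g₀ * g) hmaps
          (fun a _ b _ hab => mul_left_cancel hab)
      have hsplit : A.card + (Finset.univ.filter (fun g => ¬ (4:ℤ) ∣ S g - 2)).card
          = Fintype.card G := by
        rw [hAdef]
        exact Finset.card_filter_add_card_filter_not _
      rw [hG] at hsplit
      omega
  -- conclude
  have hsub : A.erase 1 ⊆ Finset.univ.erase (1:G) :=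
    Finset.erase_subset_erase _ (Finset.subset_univ A)
  have hcount : 2 * t ≤ (A.erase 1).card := by
    rw [Finset.card_erase_of_mem h1A]
    omega
  have step1 : (4 * t : ℤ) ≤ ∑ g ∈ A.erase 1, (2:ℤ) := by
    rw [Finset.sum_const, nsmul_eq_mul]
    have : (2 * t : ℤ) ≤ ((A.erase 1).card : ℤ) := by exact_mod_cast hcount
    linarith
  have step2 : ∑ g ∈ A.erase 1, (2:ℤ) ≤ ∑ g ∈ A.erase 1, |S g| := by
    refine Finset.sum_le_sum fun g hg => ?_
    have hg' : g ∈ A := Finset.mem_of_mem_erase hg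
    simp only [hAdef, Finset.mem_filter, Finset.mem_univ, true_and] at hg'
    rcases le_or_gt 0 (S g) with h | h
    · rw [abs_of_nonneg h]; omega
    · rw [abs_of_neg h]; omega
  have step3 : ∑ g ∈ A.erase 1, |S g| ≤ ∑ g ∈ Finset.univ.erase (1:G), |S g| :=
    Finset.sum_le_sum_of_subset_of_nonneg hsub fun g _ _ => abs_nonneg _
  calc (4 * t : ℤ) ≤ ∑ g ∈ A.erase 1, (2:ℤ) := step1
    _ ≤ ∑ g ∈ A.erase 1, |S g| := step2
    _ ≤ ∑ g ∈ Finset.univ.erase (1:G), |S g| := step3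
end

section
/- Let G be a finite group of order 4t+2 > 2 and φ : G → {±1} a normalized map (φ(1)=1), with coboundary ∂φ(g,h) = φ(g)φ(h)φ(gh). Then the row excess of M_{∂φ}, i.e., Σ_{g≠1}|Σ_{h∈G} ∂φ(g,h)|, is at least 8t+2. -/
/-!
Writing `ψ = φ - 1 ∈ {0, -2}`, each product `ψ h * ψ (g h)` is divisible by `4`, and expanding
`∑ h, ψ h * ψ (g h)` shows that `∑ h, φ h * φ (g h)` is congruent to `|G|` modulo `4`.
When `|G| ≡ 2 (mod 4)` every row sum of `M_{∂φ}` is therefore nonzero, hence of absolute value at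
least `2`, and the `4t + 1` rows indexed by `g ≠ 1` contribute at least `8t + 2`.
-/

open Finset

section Signs

variable {α : Type*} [Fintype α] {φ : α → ℤ}

theorem sum_sign_modEq_card (hφ : ∀ a, φ a = 1 ∨ φ a = -1) :
    ∑ a, φ a ≡ Fintype.card α [ZMOD 2] := by
  calc ∑ a, φ a ≡ ∑ _a : α, 1 [ZMOD 2] :=
        Int.ModEq.sum fun a _ => by rcases hφ a with h | h <;> simp [h, Int.ModEq]
    _ = Fintype.card α := by simp

theorem sum_sign_mul_comp_perm_modEq_card (hφ : ∀ a, φ a = 1 ∨ φ a = -1) (σ : Equiv.Perm α) :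
    ∑ a, φ a * φ (σ a) ≡ Fintype.card α [ZMOD 4] := by
  have hexpand : ∑ a, φ a * φ (σ a) =
      ∑ a, (φ a - 1) * (φ (σ a) - 1) + 2 * ∑ a, φ a - Fintype.card α := by
    have hperm : ∑ a, φ (σ a) = ∑ a, φ a := Equiv.sum_comp σ φ
    simp only [sub_one_mul, mul_sub_one, sum_sub_distrib, hperm, sum_const, card_univ,
      nsmul_eq_mul, mul_one]
    ring
  have hfour : (4 : ℤ) ∣ ∑ a, (φ a - 1) * (φ (σ a) - 1) :=
    dvd_sum fun a _ => by
      rcases hφ a with h | h <;> rcases hφ (σ a) with h' | h' <;> simp [h, h']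
  have hparity := sum_sign_modEq_card hφ
  rw [hexpand]
  unfold Int.ModEq at *
  omega

end Signs

theorem two_le_abs_of_modEq_two {x : ℤ} (h : x ≡ 2 [ZMOD 4]) : 2 ≤ |x| := by
  unfold Int.ModEq at h
  rw [le_abs']
  omega

theorem two_le_abs_sum_coboundary {G : Type*} [Group G] [Fintype G]
    (hG : Fintype.card G ≡ 2 [ZMOD 4]) {φ : G → ℤ} (hφ : ∀ g, φ g = 1 ∨ φ g = -1) (g : G) :
    2 ≤ |∑ h, φ g * φ h * φ (g * h)| := by
  have hrow : ∑ h, φ g * φ h * φ (g * h) = φ g * ∑ h, φ h * φ (Equiv.mulLeft g h) := by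
    simp only [mul_sum, Equiv.coe_mulLeft, mul_assoc]
  have habs : |φ g| = 1 := by rcases hφ g with h | h <;> simp [h]
  rw [hrow, abs_mul, habs, one_mul]
  exact two_le_abs_of_modEq_two ((sum_sign_mul_comp_perm_modEq_card hφ _).trans hG)

theorem stmt_4_general (t : ℕ) (G : Type*) [Group G] [Fintype G] [DecidableEq G]
    (hG : Fintype.card G = 4 * t + 2)
    (φ : G → ℤ) (hval : ∀ g, φ g = 1 ∨ φ g = -1) :
    (8 * t + 2 : ℤ) ≤
      ∑ g ∈ Finset.univ.erase (1 : G), |∑ h : G, φ g * φ h * φ (g * h)| := by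
  have hG4 : (Fintype.card G : ℤ) ≡ 2 [ZMOD 4] := by
    rw [hG, Int.ModEq]
    omega
  calc (8 * t + 2 : ℤ) = ∑ _g ∈ univ.erase (1 : G), 2 := by
        rw [sum_const, card_erase_of_mem (mem_univ 1), card_univ, hG, nsmul_eq_mul]
        push_cast
        ring
    _ ≤ _ := sum_le_sum fun g _ => two_le_abs_sum_coboundary hG4 hval g

/-- the row excess of a coboundary matrix over a group of order
`4t + 2 > 2` is at least `8t + 2`. -/
theorem stmt_4 (t : ℕ) (ht : 1 ≤ t) (G : Type*) [Group G] [Fintype G] [DecidableEq G]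
    (hG : Fintype.card G = 4 * t + 2)
    (φ : G → ℤ) (hval : ∀ g, φ g = 1 ∨ φ g = -1) (hnorm : φ 1 = 1) :
    (8 * t + 2 : ℤ) ≤
      ∑ g ∈ Finset.univ.erase (1 : G), |∑ h : G, φ g * φ h * φ (g * h)| :=
  stmt_4_general t G hG φ hval
end

section
/- Let G have order 4t+2, ψ a normalized {±1}-valued 2-cocycle on G, and for m ∈ Z let X_m = {g ∈ G : Σ_{h∈G} ψ(g,h) = m}. If ψ is a coboundary, then the row excess of M_ψ equals 8t+2 if and only if |X_2 ∪ X_{-2}| = 4t+1. If ψ is not a coboundary, then the row excess equals 4t if and only if |X_0| = 2t+1 and |X_2 ∪ X_{-2}| = 2t. -/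
open Finset

private lemma aux_sum_prod {G : Type*} [DecidableEq G] (f : G → ℤ) :
    ∀ s : Finset G, (∀ x ∈ s, f x = 1 ∨ f x = -1) →
    ∃ k : ℕ, (∑ x ∈ s, f x) = s.card - 2 * k ∧ (∏ x ∈ s, f x) = (-1) ^ k := by
  intro s
  induction s using Finset.induction_on with
  | empty => exact fun _ => ⟨0, by simp⟩
  | @insert a s ha ih =>
    intro hv
    obtain ⟨k, hk1, hk2⟩ := ih fun x hx => hv x (mem_insert_of_mem hx)
    rcases hv a (mem_insert_self a s) with h | h
    · refine ⟨k, ?_, ?_⟩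
      · rw [sum_insert ha, card_insert_of_notMem ha, h, hk1]; push_cast; ring
      · rw [prod_insert ha, h, hk2, one_mul]
    · refine ⟨k + 1, ?_, ?_⟩
      · rw [sum_insert ha, card_insert_of_notMem ha, h, hk1]; push_cast; ring
      · rw [prod_insert ha, h, hk2, pow_succ]; ring

private lemma filter_card_iff {α : Type*} [DecidableEq α] (F E : Finset α) (hFE : F ⊆ E) :
    F.card = E.card ↔ ∀ g ∈ E, g ∈ F := by
  constructor
  · intro h g hg
    rw [Finset.eq_of_subset_of_card_le hFE h.ge]; exact hg
  · intro h
    exact le_antisymm (Finset.card_le_card hFE) (Finset.card_le_card fun g hg => h g hg)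

private lemma two_le_abs_of (S : ℤ) (h : 2 ≤ S ∨ S ≤ -2) : 2 ≤ |S| := by
  rcases h with h | h
  · exact h.trans (le_abs_self S)
  · exact le_trans (by omega : (2:ℤ) ≤ -S) (neg_le_abs S)

private lemma sum_lb_eq {α : Type*} (E : Finset α) (f : α → ℤ) (c : ℤ)
    (h : ∀ g ∈ E, c ≤ f g) :
    (∑ g ∈ E, f g) = c * E.card ↔ ∀ g ∈ E, f g = c := by
  have key : (∑ g ∈ E, (f g - c)) = (∑ g ∈ E, f g) - c * E.card := by
    rw [Finset.sum_sub_distrib, Finset.sum_const, nsmul_eq_mul]; ring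
  constructor
  · intro hsum g hg
    have h0 : (∑ g ∈ E, (f g - c)) = 0 := by rw [key, hsum]; ring
    have := (Finset.sum_eq_zero_iff_of_nonneg (fun g hg => by linarith [h g hg])).mp h0 g hg
    linarith
  · intro hall
    rw [Finset.sum_congr rfl hall, Finset.sum_const, nsmul_eq_mul]; ring
/-- characterization of quasi-orthogonal cocycles:
for a normalized ±1 cocycle `ψ` over a group of order `4t+2`, with
`X_m = {g : Σ_h ψ(g,h) = m}`: if `ψ` is a coboundary then the row excess
equals `8t+2` iff `|X₂ ∪ X₋₂| = 4t+1`; if `ψ` is not a coboundary then the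
row excess equals `4t` iff `|X₀| = 2t+1` and `|X₂ ∪ X₋₂| = 2t`. -/
theorem stmt_5 (t : ℕ) (ht : 1 ≤ t) (G : Type*) [Group G] [Fintype G]
    [DecidableEq G] (hG : Fintype.card G = 4 * t + 2)
    (ψ : G → G → ℤ) (hval : ∀ g h, ψ g h = 1 ∨ ψ g h = -1)
    (hnorm : ψ 1 1 = 1)
    (hcoc : ∀ g h k, ψ g h * ψ (g * h) k = ψ g (h * k) * ψ h k) :
    ((∃ φ : G → ℤ, φ 1 = 1 ∧ (∀ g, φ g = 1 ∨ φ g = -1) ∧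
        ∀ g h, ψ g h = φ g * φ h * φ (g * h)) →
      ((∑ g ∈ Finset.univ.erase (1 : G), |∑ h : G, ψ g h|) = 8 * t + 2 ↔
        (Finset.univ.filter
          (fun g : G => (∑ h : G, ψ g h) = 2 ∨ (∑ h : G, ψ g h) = -2)).card
            = 4 * t + 1)) ∧
    (¬ (∃ φ : G → ℤ, φ 1 = 1 ∧ (∀ g, φ g = 1 ∨ φ g = -1) ∧
        ∀ g h, ψ g h = φ g * φ h * φ (g * h)) →
      ((∑ g ∈ Finset.univ.erase (1 : G), |∑ h : G, ψ g h|) = 4 * t ↔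
        ((Finset.univ.filter (fun g : G => (∑ h : G, ψ g h) = 0)).card
            = 2 * t + 1 ∧
         (Finset.univ.filter
          (fun g : G => (∑ h : G, ψ g h) = 2 ∨ (∑ h : G, ψ g h) = -2)).card
            = 2 * t))) := by
  classical
  -- ψ 1 x = 1 and ψ x 1 = 1
  have hψ1 : ∀ x : G, ψ 1 x = 1 := by
    intro x
    have h := hcoc 1 1 x
    rw [one_mul, one_mul, hnorm, one_mul] at h
    rcases hval 1 x with h1 | h1
    · exact h1
    · rw [h1] at h; norm_num at h
  have hS1 : (∑ h : G, ψ 1 h) = (4*t+2 : ℤ) := by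
    have h1 : (∑ h : G, ψ 1 h) = ∑ _h : G, (1:ℤ) := Finset.sum_congr rfl fun x _ => hψ1 x
    rw [h1, Finset.sum_const, Finset.card_univ, hG, nsmul_eq_mul]; push_cast; ring
  -- the multiset structure of each row
  obtain ⟨k, hk⟩ : ∃ k : G → ℕ, ∀ g, (∑ h : G, ψ g h) = (4*t+2 : ℤ) - 2 * k g ∧
      (∏ h : G, ψ g h) = (-1) ^ (k g) := by
    choose k h1 h2 using fun g => aux_sum_prod (ψ g) (Finset.univ : Finset G) (fun x _ => hval g x)
    refine ⟨k, fun g => ⟨?_, h2 g⟩⟩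
    rw [h1 g, Finset.card_univ, hG]; push_cast; ring
  -- the product of each row is a homomorphism
  have hPmul : ∀ g h : G, (∏ x : G, ψ (g*h) x) = (∏ x : G, ψ g x) * (∏ x : G, ψ h x) := by
    intro g h
    have key : (∏ x : G, (ψ g h * ψ (g*h) x)) = ∏ x : G, (ψ g (h*x) * ψ h x) :=
      Finset.prod_congr rfl fun x _ => hcoc g h x
    rw [Finset.prod_mul_distrib, Finset.prod_mul_distrib, Finset.prod_const] at key
    have h2 : (∏ x : G, ψ g (h*x)) = ∏ x : G, ψ g x := by
      simpa using Equiv.prod_comp (Equiv.mulLeft h) (ψ g)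
    have h5 : ψ g h ^ (Finset.univ : Finset G).card = 1 := by
      rw [Finset.card_univ, hG]
      rcases hval g h with hv | hv <;> rw [hv]
      · exact one_pow _
      · exact Even.neg_one_pow ⟨2*t+1, by ring⟩
    rw [h5, one_mul, h2] at key
    exact key
  have hP1 : (∏ h : G, ψ 1 h) = 1 := Finset.prod_eq_one fun x _ => hψ1 x
  -- parity consequences
  have hk1even : Even (k 1) := by
    have := (hk 1).2
    rw [hP1] at this
    exact (neg_one_pow_eq_one_iff_even (by norm_num : (-1:ℤ) ≠ 1)).mp this.symm
  have habs2 : ∀ g : G, Even (k g) → 2 ≤ |∑ h : G, ψ g h| := by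
    intro g hg
    obtain ⟨m, hm⟩ := hg
    have hs := (hk g).1
    exact two_le_abs_of _ (by omega)
  have habs_eq : ∀ g : G, |∑ h : G, ψ g h| = 2 ↔
      ((∑ h : G, ψ g h) = 2 ∨ (∑ h : G, ψ g h) = -2) := fun g => abs_eq (by norm_num)
  have hEcard : (Finset.univ.erase (1:G)).card = 4*t+1 := by
    rw [Finset.card_erase_of_mem (Finset.mem_univ 1), Finset.card_univ, hG]; omega
  have hS1ne : ¬((∑ h : G, ψ 1 h) = 2 ∨ (∑ h : G, ψ 1 h) = -2) := by
    rw [hS1]; push_cast; omega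
  constructor
  · -- coboundary case
    rintro ⟨φ, hφ1, hφv, hφ⟩
    -- all row products are 1
    have hPg : ∀ g : G, Even (k g) := by
      intro g
      have h1 : (∏ h : G, ψ g h) = ∏ h : G, (φ g * (φ h * φ (g*h))) :=
        Finset.prod_congr rfl fun h _ => by rw [hφ g h]; ring
      rw [Finset.prod_mul_distrib, Finset.prod_const, Finset.prod_mul_distrib] at h1
      have h2 : (∏ h : G, φ (g*h)) = ∏ h : G, φ h := by
        simpa using Equiv.prod_comp (Equiv.mulLeft g) φ
      have h4 : (∏ h : G, φ h) * (∏ h : G, φ h) = 1 := by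
        rw [← Finset.prod_mul_distrib]
        exact Finset.prod_eq_one fun x _ => by rcases hφv x with h|h <;> rw [h] <;> norm_num
      have h5 : φ g ^ (Finset.univ : Finset G).card = 1 := by
        rw [Finset.card_univ, hG]
        rcases hφv g with h|h <;> rw [h]
        · exact one_pow _
        · exact Even.neg_one_pow ⟨2*t+1, by ring⟩
      rw [h2, h5, one_mul, h4] at h1
      have := (hk g).2
      rw [h1] at this
      exact (neg_one_pow_eq_one_iff_even (by norm_num : (-1:ℤ) ≠ 1)).mp this.symm
    -- both sides equivalent to: every g ≠ 1 has |row sum| = 2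
    have lhs_iff : (∑ g ∈ Finset.univ.erase (1 : G), |∑ h : G, ψ g h|) = 8 * t + 2 ↔
        ∀ g ∈ Finset.univ.erase (1:G), |∑ h : G, ψ g h| = 2 := by
      have := sum_lb_eq (Finset.univ.erase (1:G)) (fun g => |∑ h : G, ψ g h|) 2
        (fun g _ => habs2 g (hPg g))
      rw [hEcard] at this
      rw [← this]; push_cast; constructor <;> intro h <;> omega
    have hFsub : (Finset.univ.filter
        (fun g : G => (∑ h : G, ψ g h) = 2 ∨ (∑ h : G, ψ g h) = -2)) ⊆
        Finset.univ.erase (1:G) := by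
      intro g hg
      rw [Finset.mem_filter] at hg
      rw [Finset.mem_erase]
      refine ⟨fun h => ?_, Finset.mem_univ g⟩
      rw [h] at hg
      exact hS1ne hg.2
    have rhs_iff : (Finset.univ.filter
        (fun g : G => (∑ h : G, ψ g h) = 2 ∨ (∑ h : G, ψ g h) = -2)).card = 4 * t + 1 ↔
        ∀ g ∈ Finset.univ.erase (1:G), |∑ h : G, ψ g h| = 2 := by
      rw [show 4*t+1 = (Finset.univ.erase (1:G)).card from hEcard.symm,
        filter_card_iff _ _ hFsub]
      constructor <;> intro h g hg <;> have := h g hg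
      · rw [habs_eq g]; exact (Finset.mem_filter.mp this).2
      · exact Finset.mem_filter.mpr ⟨Finset.mem_univ g, (habs_eq g).mp this⟩
    rw [lhs_iff, rhs_iff]
  · -- non-coboundary case (hypothesis unused)
    intro _
    by_cases hall : ∀ g : G, Even (k g)
    · -- all rows ≡ 2 mod 4 : both sides are false
      have hge : (8*t+2 : ℤ) ≤ ∑ g ∈ Finset.univ.erase (1 : G), |∑ h : G, ψ g h| := by
        calc (8*t+2 : ℤ) = 2 * ((Finset.univ.erase (1:G)).card : ℤ) := by
              rw [hEcard]; push_cast; ring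
          _ = ∑ _g ∈ Finset.univ.erase (1:G), (2:ℤ) := by
              rw [Finset.sum_const, nsmul_eq_mul]; ring
          _ ≤ _ := Finset.sum_le_sum fun g _ => habs2 g (hall g)
      have hX0 : (Finset.univ.filter (fun g : G => (∑ h : G, ψ g h) = 0)) = ∅ := by
        refine Finset.filter_eq_empty_iff.mpr fun g _ => ?_
        obtain ⟨m, hm⟩ := hall g
        have hs := (hk g).1
        omega
      constructor
      · intro h; exfalso; omega
      · rintro ⟨h0, -⟩; rw [hX0, Finset.card_empty] at h0; omega
    · push_neg at hall
      obtain ⟨g₀, hg₀⟩ := hall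
      have hPg₀ : (∏ x : G, ψ g₀ x) = -1 := by
        rw [(hk g₀).2, (Nat.not_even_iff_odd.mp hg₀).neg_one_pow]
      -- the kernel/non-kernel split
      set Kc : Finset G := Finset.univ.filter (fun g => ¬ Even (k g)) with hKcdef
      set K' : Finset G := (Finset.univ.filter (fun g => Even (k g))).erase 1 with hK'def
      have hmemKc : ∀ g : G, g ∈ Kc ↔ (∏ x : G, ψ g x) = -1 := by
        intro g
        rw [hKcdef, Finset.mem_filter, (hk g).2]
        constructor
        · rintro ⟨-, h⟩; rw [(Nat.not_even_iff_odd.mp h).neg_one_pow]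
        · intro h
          refine ⟨Finset.mem_univ g, fun he => ?_⟩
          rw [he.neg_one_pow] at h; norm_num at h
      have hmemK : ∀ g : G, g ∈ (Finset.univ.filter (fun g => Even (k g))) ↔
          (∏ x : G, ψ g x) = 1 := by
        intro g
        rw [Finset.mem_filter, (hk g).2]
        constructor
        · rintro ⟨-, h⟩; rw [h.neg_one_pow]
        · intro h
          refine ⟨Finset.mem_univ g, ?_⟩
          exact (neg_one_pow_eq_one_iff_even (by norm_num : (-1:ℤ) ≠ 1)).mp h
      -- card Kc = card K = 2t+1
      have hcards : Kc.card = (Finset.univ.filter (fun g : G => Even (k g))).card := by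
        symm
        apply Finset.card_bij (fun x _ => g₀ * x)
        · intro a ha
          rw [hmemKc, hPmul, hPg₀, (hmemK a).mp ha]; ring
        · intro a ha b hb hab
          exact mul_left_cancel hab
        · intro b hb
          refine ⟨g₀⁻¹ * b, ?_, by group⟩
          rw [hmemK]
          have h1 : (∏ x : G, ψ (g₀ * (g₀⁻¹ * b)) x) = -1 := by
            rw [show g₀ * (g₀⁻¹ * b) = b by group]; exact (hmemKc b).mp hb
          rw [hPmul, hPg₀] at h1
          linarith
      have hsplit : (Finset.univ.filter (fun g : G => Even (k g))).card + Kc.card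
          = 4*t+2 := by
        rw [hKcdef, Finset.card_filter_add_card_filter_not,
          Finset.card_univ, hG]
      have hKccard : Kc.card = 2*t+1 := by omega
      have h1K : (1:G) ∈ Finset.univ.filter (fun g : G => Even (k g)) :=
        Finset.mem_filter.mpr ⟨Finset.mem_univ 1, hk1even⟩
      have hK'card : K'.card = 2*t := by
        rw [hK'def, Finset.card_erase_of_mem h1K]
        omega
      -- E = Kc ∪ K', disjointly
      have hdisj : Disjoint Kc K' := by
        rw [Finset.disjoint_left]
        intro a ha ha'
        have h1 := Finset.mem_filter.mp (Finset.mem_of_mem_erase ha')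
        have h2 := Finset.mem_filter.mp ha
        exact h2.2 h1.2
      have hEeq : Finset.univ.erase (1:G) = Kc ∪ K' := by
        ext g
        simp only [Finset.mem_erase, Finset.mem_univ, and_true, Finset.mem_union,
          Finset.mem_filter, hK'def, hKcdef, true_and]
        constructor
        · intro h
          by_cases he : Even (k g)
          · exact Or.inr ⟨h, he⟩
          · exact Or.inl he
        · rintro (h | ⟨h, -⟩)
          · intro he; rw [he] at h; exact h hk1even
          · exact h
      have hsum_split : (∑ g ∈ Finset.univ.erase (1 : G), |∑ h : G, ψ g h|) =
          (∑ g ∈ Kc, |∑ h : G, ψ g h|) + ∑ g ∈ K', |∑ h : G, ψ g h| := by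
        rw [hEeq, Finset.sum_union hdisj]
      -- row sums in Kc are ≡ 0 mod 4; in K' they are ≡ 2 mod 4
      have hKc4 : ∀ g ∈ Kc, (∑ h : G, ψ g h) = 0 ∨ 4 ≤ |∑ h : G, ψ g h| := by
        intro g hg
        have hodd := Nat.not_even_iff_odd.mp (Finset.mem_filter.mp hg).2
        obtain ⟨m, hm⟩ := hodd
        have hs := (hk g).1
        rcases (by omega : (∑ h : G, ψ g h) = 0 ∨ 4 ≤ (∑ h : G, ψ g h) ∨ (∑ h : G, ψ g h) ≤ -4) with h|h|h
        · exact Or.inl h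
        · exact Or.inr (h.trans (le_abs_self _))
        · exact Or.inr (le_trans (by omega : (4:ℤ) ≤ -(∑ h : G, ψ g h)) (neg_le_abs _))
      have hK'2 : ∀ g ∈ K', 2 ≤ |∑ h : G, ψ g h| := by
        intro g hg
        exact habs2 g (Finset.mem_filter.mp (Finset.mem_of_mem_erase hg)).2
      -- LHS iff
      have lhs_iff : (∑ g ∈ Finset.univ.erase (1 : G), |∑ h : G, ψ g h|) = 4 * t ↔
          ((∀ g ∈ Kc, (∑ h : G, ψ g h) = 0) ∧ ∀ g ∈ K', |∑ h : G, ψ g h| = 2) := by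
        constructor
        · intro h
          rw [hsum_split] at h
          have hb1 : (0:ℤ) ≤ ∑ g ∈ Kc, |∑ h : G, ψ g h| :=
            Finset.sum_nonneg fun g _ => abs_nonneg _
          have hb2 : (4*t : ℤ) ≤ ∑ g ∈ K', |∑ h : G, ψ g h| := by
            calc (4*t : ℤ) = 2 * (K'.card : ℤ) := by rw [hK'card]; push_cast; ring
              _ = ∑ _g ∈ K', (2:ℤ) := by rw [Finset.sum_const, nsmul_eq_mul]; ring
              _ ≤ _ := Finset.sum_le_sum hK'2
          have hz1 : (∑ g ∈ Kc, |∑ h : G, ψ g h|) = 0 := by push_cast at h ⊢; omega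
          have hz2 : (∑ g ∈ K', |∑ h : G, ψ g h|) = 2 * (K'.card : ℤ) := by
            rw [hK'card]; push_cast at h ⊢; omega
          constructor
          · intro g hg
            have := (Finset.sum_eq_zero_iff_of_nonneg fun g _ => abs_nonneg _).mp hz1 g hg
            exact abs_eq_zero.mp this
          · exact (sum_lb_eq K' _ 2 hK'2).mp hz2
        · rintro ⟨h1, h2⟩
          rw [hsum_split, Finset.sum_congr rfl (fun g hg => by rw [h1 g hg, abs_zero]),
            Finset.sum_congr rfl h2, Finset.sum_const, Finset.sum_const, hK'card]
          push_cast; ring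
      -- RHS iff
      have hX0sub : (Finset.univ.filter (fun g : G => (∑ h : G, ψ g h) = 0)) ⊆ Kc := by
        intro g hg
        have hs0 := (Finset.mem_filter.mp hg).2
        rw [hKcdef, Finset.mem_filter]
        refine ⟨Finset.mem_univ g, fun he => ?_⟩
        obtain ⟨m, hm⟩ := he
        have hs := (hk g).1
        omega
      have hX2sub : (Finset.univ.filter
          (fun g : G => (∑ h : G, ψ g h) = 2 ∨ (∑ h : G, ψ g h) = -2)) ⊆ K' := by
        intro g hg
        have hs2 := (Finset.mem_filter.mp hg).2
        rw [hK'def, Finset.mem_erase]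
        constructor
        · intro he; rw [he] at hs2; exact hS1ne hs2
        · rw [Finset.mem_filter]
          refine ⟨Finset.mem_univ g, ?_⟩
          by_contra he
          obtain ⟨m, hm⟩ := Nat.not_even_iff_odd.mp he
          have hs := (hk g).1
          omega
      have rhs1 : (Finset.univ.filter (fun g : G => (∑ h : G, ψ g h) = 0)).card = 2*t+1 ↔
          ∀ g ∈ Kc, (∑ h : G, ψ g h) = 0 := by
        rw [show 2*t+1 = Kc.card from hKccard.symm, filter_card_iff _ _ hX0sub]
        constructor <;> intro h g hg
        · exact (Finset.mem_filter.mp (h g hg)).2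
        · exact Finset.mem_filter.mpr ⟨Finset.mem_univ g, h g hg⟩
      have rhs2 : (Finset.univ.filter
          (fun g : G => (∑ h : G, ψ g h) = 2 ∨ (∑ h : G, ψ g h) = -2)).card = 2*t ↔
          ∀ g ∈ K', |∑ h : G, ψ g h| = 2 := by
        rw [show 2*t = K'.card from hK'card.symm, filter_card_iff _ _ hX2sub]
        constructor <;> intro h g hg
        · exact (habs_eq g).mpr (Finset.mem_filter.mp (h g hg)).2
        · exact Finset.mem_filter.mpr ⟨Finset.mem_univ g, (habs_eq g).mp (h g hg)⟩
      rw [lhs_iff, rhs1, rhs2]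
end

section
/- Let G be a finite group of order 4t+2 > 2 and ψ a normalized {±1}-valued 2-cocycle on G that is quasi-orthogonal (M_ψ has minimal row excess: 8t+2 if ψ is a coboundary, 4t otherwise). Let E_ψ be the central extension with underlying set {±1} × G and multiplication (u,g)(v,h) = (uvψ(g,h), gh). Then D = {(1,g) : g ∈ G} is a relative (4t+2, 2, 4t+2, 2t+1)-quasi-difference set in E_ψ with forbidden subgroup ⟨(-1,1)⟩, which is extremal when ψ is a coboundary. -/
private lemma zu_pow_even (u : ℤˣ) {n : ℕ} (hn : Even n) : u ^ n = 1 := by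
  obtain ⟨m, rfl⟩ := hn
  rw [pow_add]
  exact Int.units_mul_self _

private lemma all_eq_of_sum_eq {α : Type*} {s : Finset α} {f : α → ℤ} {c : ℤ}
    (h1 : ∀ i ∈ s, c ≤ f i) (h2 : ∑ i ∈ s, f i = c * s.card) :
    ∀ i ∈ s, f i = c := by
  intro i hi
  by_contra hne
  have hlt : ∑ _j ∈ s, c < ∑ j ∈ s, f j :=
    Finset.sum_lt_sum h1 ⟨i, hi, lt_of_le_of_ne (h1 i hi) (Ne.symm hne)⟩
  rw [Finset.sum_const, h2, nsmul_eq_mul, mul_comm] at hlt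
  exact lt_irrefl _ hlt

/-- Multiplication of the canonical central extension `E_ψ = {±1} × G`
determined by a ±1-valued cocycle `ψ`: `(u,g)(v,h) = (uvψ(g,h), gh)`. -/
def extMul {G : Type*} [Group G] (ψ : G → G → ℤˣ) (x y : ℤˣ × G) : ℤˣ × G :=
  (x.1 * y.1 * ψ x.2 y.2, x.2 * y.2)

/-- if `ψ` is a quasi-orthogonal cocycle over a group `G` of
order `4t+2 > 2`, then `D = {(1,g) : g ∈ G}` is a relative
`(4t+2,2,4t+2,2t+1)`-quasi-difference set in the central extension `E_ψ` with
forbidden subgroup `⟨(-1,1)⟩ = {(1,1),(-1,1)}`, extremal when `ψ` is a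
coboundary. -/
theorem stmt_7 (t : ℕ) (ht : 1 ≤ t) (G : Type*) [Group G] [Fintype G]
    [DecidableEq G] (hG : Fintype.card G = 4 * t + 2)
    (ψ : G → G → ℤˣ) (hnorm : ψ 1 1 = 1)
    (hcoc : ∀ g h k, ψ g h * ψ (g * h) k = ψ g (h * k) * ψ h k)
    -- `ψ` is quasi-orthogonal: its row excess attains the minimum,
    -- `8t+2` for coboundaries and `4t` for non-coboundaries
    (hqo :
      ((∃ φ : G → ℤˣ, φ 1 = 1 ∧ ∀ g h, ψ g h = φ g * φ h * φ (g * h)) ∧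
        (∑ g ∈ Finset.univ.erase (1 : G), |∑ h : G, ((ψ g h : ℤ))|)
          = 8 * t + 2) ∨
      (¬ (∃ φ : G → ℤˣ, φ 1 = 1 ∧ ∀ g h, ψ g h = φ g * φ h * φ (g * h)) ∧
        (∑ g ∈ Finset.univ.erase (1 : G), |∑ h : G, ((ψ g h : ℤ))|)
          = 4 * t)) :
    -- `D = {(1,g) : g ∈ G}` is a transversal for `Z = {(1,1),(-1,1)}` ...
    (∀ e : ℤˣ × G,
      ∃! r, r ∈ (Finset.univ.image fun g : G => ((1 : ℤˣ), g)) ∧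
        (e = extMul ψ r ((1 : ℤˣ), (1 : G)) ∨
         e = extMul ψ r ((-1 : ℤˣ), (1 : G)))) ∧
    -- ... containing a suitable subset `S` witnessing the quasi-difference
    -- set property, with `S = ∅` when `ψ` is a coboundary
    (∃ S : Finset (ℤˣ × G),
      S ⊆ (Finset.univ.image fun g : G => ((1 : ℤˣ), g)).erase
            ((1 : ℤˣ), (1 : G)) ∧
      (S.card = 0 ∨ S.card = 2 * t + 1) ∧
      (∀ x : ℤˣ × G,
        x ∉ ({((1 : ℤˣ), (1 : G)), ((-1 : ℤˣ), (1 : G))} : Finset (ℤˣ × G)) →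
        (((∃ s ∈ S, x = extMul ψ s ((1 : ℤˣ), (1 : G)) ∨
                    x = extMul ψ s ((-1 : ℤˣ), (1 : G))) →
          ((Finset.univ.image fun g : G => ((1 : ℤˣ), g)) ∩
            ((Finset.univ.image fun g : G => ((1 : ℤˣ), g)).image
              (extMul ψ x))).card = 2 * t + 1) ∧
         (¬ (∃ s ∈ S, x = extMul ψ s ((1 : ℤˣ), (1 : G)) ∨
                      x = extMul ψ s ((-1 : ℤˣ), (1 : G))) →
          ((Finset.univ.image fun g : G => ((1 : ℤˣ), g)) ∩
            ((Finset.univ.image fun g : G => ((1 : ℤˣ), g)).image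
              (extMul ψ x))).card = 2 * t ∨
          ((Finset.univ.image fun g : G => ((1 : ℤˣ), g)) ∩
            ((Finset.univ.image fun g : G => ((1 : ℤˣ), g)).image
              (extMul ψ x))).card = 2 * t + 2))) ∧
      ((∃ φ : G → ℤˣ, φ 1 = 1 ∧ ∀ g h, ψ g h = φ g * φ h * φ (g * h)) →
        S = ∅)) := by
  classical
  -- basic cocycle facts
  have hψ1 : ∀ h : G, ψ 1 h = 1 := by
    intro h
    have e := hcoc 1 1 h
    simp only [one_mul, hnorm] at e
    exact mul_eq_left.mp e.symm
  have hψg1 : ∀ g : G, ψ g 1 = 1 := by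
    intro g
    have e := hcoc g 1 1
    simp only [mul_one, hnorm] at e
    exact mul_eq_left.mp e
  have hEcard : Even (Fintype.card G) := by rw [hG]; exact ⟨2 * t + 1, by ring⟩
  -- the transversal `D`
  set D : Finset (ℤˣ × G) := Finset.univ.image fun g : G => ((1 : ℤˣ), g) with hD
  have hmulD : ∀ (b : G) (v : ℤˣ), extMul ψ ((1 : ℤˣ), b) (v, (1 : G)) = (v, b) := by
    intro b v
    simp [extMul, hψg1 b]
  -- the intersection count
  have hcount : ∀ x : ℤˣ × G,
      (D ∩ D.image (extMul ψ x)).card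
        = (Finset.univ.filter fun g : G => ψ x.2 g = x.1).card := by
    intro x
    have himg : D.image (extMul ψ x)
        = Finset.univ.image fun g : G => (x.1 * ψ x.2 g, x.2 * g) := by
      rw [hD, Finset.image_image]
      apply Finset.image_congr
      intro g _
      simp [extMul]
    rw [himg]
    have hinter : D ∩ (Finset.univ.image fun g : G => (x.1 * ψ x.2 g, x.2 * g))
        = (Finset.univ.filter fun g : G => ψ x.2 g = x.1).image
            (fun g => ((1 : ℤˣ), x.2 * g)) := by
      ext y
      simp only [hD, Finset.mem_inter, Finset.mem_image, Finset.mem_filter,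
        Finset.mem_univ, true_and]
      constructor
      · rintro ⟨⟨g, rfl⟩, g', hg'⟩
        have h1 : x.1 * ψ x.2 g' = 1 := (Prod.ext_iff.mp hg').1
        have h2 : x.2 * g' = g := (Prod.ext_iff.mp hg').2
        have hψu : ψ x.2 g' = x.1 := by
          have : x.1 * ψ x.2 g' = x.1 * x.1 := by rw [h1, Int.units_mul_self]
          exact mul_left_cancel this
        exact ⟨g', hψu, by rw [h2]⟩
      · rintro ⟨g, hg, rfl⟩
        exact ⟨⟨x.2 * g, rfl⟩, ⟨g, by rw [hg, Int.units_mul_self]⟩⟩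
    rw [hinter]
    apply Finset.card_image_of_injective
    intro g1 g2 hgg
    exact mul_left_cancel (Prod.ext_iff.mp hgg).2
  -- plus/minus counts versus row sums
  have hfneg : ∀ a : G, (Finset.univ.filter fun g : G => ¬ ψ a g = 1)
      = (Finset.univ.filter fun g : G => ψ a g = -1) := by
    intro a
    apply Finset.filter_congr
    intro g _
    rcases Int.units_eq_one_or (ψ a g) with h | h <;> simp [h]
  have hpm : ∀ a : G,
      ((Finset.univ.filter fun g : G => ψ a g = 1).card
        + (Finset.univ.filter fun g : G => ψ a g = -1).card = 4 * t + 2) ∧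
      (((Finset.univ.filter fun g : G => ψ a g = 1).card : ℤ)
        - ((Finset.univ.filter fun g : G => ψ a g = -1).card : ℤ)
          = ∑ h : G, (ψ a h : ℤ)) := by
    intro a
    constructor
    · have e := Finset.card_filter_add_card_filter_not
        (s := (Finset.univ : Finset G)) (p := fun g => ψ a g = 1)
      rw [hfneg a, Finset.card_univ, hG] at e
      exact e
    · have e1 : ∑ g ∈ Finset.univ.filter (fun g : G => ψ a g = 1), ((ψ a g : ℤ))
          = ∑ _g ∈ Finset.univ.filter (fun g : G => ψ a g = 1), (1 : ℤ) :=
        Finset.sum_congr rfl fun g hg => by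
          rw [(Finset.mem_filter.mp hg).2, Units.val_one]
      have e2 : ∑ g ∈ Finset.univ.filter (fun g : G => ψ a g = -1), ((ψ a g : ℤ))
          = ∑ _g ∈ Finset.univ.filter (fun g : G => ψ a g = -1), (-1 : ℤ) :=
        Finset.sum_congr rfl fun g hg => by
          rw [(Finset.mem_filter.mp hg).2]; norm_num
      rw [← Finset.sum_filter_add_sum_filter_not Finset.univ
        (fun g => ψ a g = 1) (fun h => ((ψ a h : ℤ))), hfneg a, e1, e2]
      push_cast
      simp [mul_comm]
      ring
  -- the sign character
  set sg : G → ℤˣ := fun a => ∏ h : G, ψ a h with hsg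
  have hsg_hom : ∀ g h : G, sg (g * h) = sg g * sg h := by
    intro g h
    have e : ∏ k : G, (ψ g h * ψ (g * h) k) = ∏ k : G, (ψ g (h * k) * ψ h k) :=
      Finset.prod_congr rfl fun k _ => hcoc g h k
    rw [Finset.prod_mul_distrib, Finset.prod_mul_distrib, Finset.prod_const,
      Finset.card_univ, zu_pow_even _ hEcard, one_mul] at e
    have e2 : (∏ k : G, ψ g (h * k)) = sg g :=
      Fintype.prod_equiv (Equiv.mulLeft h) _ _ fun k => rfl
    rw [e2] at e
    exact e
  have hsg1 : sg 1 = 1 := Finset.prod_eq_one fun h _ => hψ1 h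
  have hsg_eq : ∀ a : G,
      sg a = (-1) ^ (Finset.univ.filter fun g : G => ψ a g = -1).card := by
    intro a
    show (∏ h : G, ψ a h) = _
    rw [← Finset.prod_filter_mul_prod_filter_not Finset.univ
      (fun g => ψ a g = 1) (fun g => ψ a g), hfneg a]
    rw [Finset.prod_congr rfl (fun g hg => (Finset.mem_filter.mp hg).2),
      Finset.prod_congr rfl (fun g hg => (Finset.mem_filter.mp hg).2)]
    simp
  -- rows with trivial sign have excess at least 2
  have habs : ∀ a : G, sg a = 1 → 2 ≤ |∑ h : G, (ψ a h : ℤ)| := by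
    intro a ha
    obtain ⟨hsum, hdiff⟩ := hpm a
    have hme : Even (Finset.univ.filter fun g : G => ψ a g = -1).card := by
      by_contra hodd
      rw [hsg_eq a, (Nat.not_even_iff_odd.mp hodd).neg_one_pow] at ha
      exact absurd ha (by decide)
    obtain ⟨k, hk⟩ := hme
    rcases abs_cases (∑ h : G, (ψ a h : ℤ)) with ⟨h1, h2⟩ | ⟨h1, h2⟩ <;> rw [h1] <;> omega
  -- coboundaries have trivial sign
  have hcob_sg : (∃ φ : G → ℤˣ, φ 1 = 1 ∧ ∀ g h, ψ g h = φ g * φ h * φ (g * h)) →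
      ∀ a, sg a = 1 := by
    rintro ⟨φ, -, hφ⟩ a
    show (∏ h : G, ψ a h) = 1
    calc (∏ h : G, ψ a h) = ∏ h : G, (φ a * φ h * φ (a * h)) :=
          Finset.prod_congr rfl fun h _ => hφ a h
      _ = (φ a ^ Fintype.card G) * (∏ h : G, φ h) * (∏ h : G, φ (a * h)) := by
          rw [Finset.prod_mul_distrib, Finset.prod_mul_distrib, Finset.prod_const,
            Finset.card_univ]
      _ = 1 := by
          rw [zu_pow_even _ hEcard, one_mul,
            show (∏ h : G, φ (a * h)) = ∏ h : G, φ h from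
              Fintype.prod_equiv (Equiv.mulLeft a) _ _ fun k => rfl]
          exact Int.units_mul_self _
  have hcerase : (Finset.univ.erase (1 : G)).card = 4 * t + 1 := by
    rw [Finset.card_erase_of_mem (Finset.mem_univ _), Finset.card_univ, hG]
    omega
  -- points outside the forbidden subgroup
  have hout : ∀ x : ℤˣ × G,
      x ∉ ({((1 : ℤˣ), (1 : G)), ((-1 : ℤˣ), (1 : G))} : Finset (ℤˣ × G)) →
      x.2 ≠ 1 := by
    intro x hx h2
    apply hx
    rcases Int.units_eq_one_or x.1 with hu | hu
    · exact Finset.mem_insert.mpr (Or.inl (Prod.ext_iff.mpr ⟨hu, h2⟩))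
    · exact Finset.mem_insert.mpr (Or.inr (Finset.mem_singleton.mpr
        (Prod.ext_iff.mpr ⟨hu, h2⟩)))
  constructor
  · -- transversal property
    intro e
    refine ⟨((1 : ℤˣ), e.2), ⟨Finset.mem_image.mpr ⟨e.2, Finset.mem_univ _, rfl⟩, ?_⟩, ?_⟩
    · rcases Int.units_eq_one_or e.1 with h | h
      · exact Or.inl (by rw [hmulD]; exact Prod.ext_iff.mpr ⟨h, rfl⟩)
      · exact Or.inr (by rw [hmulD]; exact Prod.ext_iff.mpr ⟨h, rfl⟩)
    · rintro r ⟨hr, hcase⟩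
      obtain ⟨b, -, rfl⟩ := Finset.mem_image.mp hr
      rcases hcase with h | h <;> rw [hmulD] at h <;>
        exact Prod.ext_iff.mpr ⟨rfl, (congrArg Prod.snd h).symm⟩
  · -- quasi-difference set property
    rcases hqo with ⟨hcb, hsum⟩ | ⟨hncb, hsum⟩
    · -- coboundary case : `S = ∅`
      have hall : ∀ a ∈ Finset.univ.erase (1 : G), |∑ h : G, (ψ a h : ℤ)| = 2 := by
        apply all_eq_of_sum_eq
        · intro a _
          exact habs a (hcob_sg hcb a)
        · rw [hsum, hcerase]; push_cast; ring
      refine ⟨∅, Finset.empty_subset _, Or.inl Finset.card_empty, ?_, fun _ => rfl⟩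
      intro x hx
      have hx2 : x.2 ≠ 1 := hout x hx
      refine ⟨?_, ?_⟩
      · rintro ⟨s', hs', -⟩
        exact absurd hs' (Finset.notMem_empty _)
      · intro _
        have h2 := hall x.2 (Finset.mem_erase.mpr ⟨hx2, Finset.mem_univ _⟩)
        obtain ⟨hsum', hdiff⟩ := hpm x.2
        rw [hcount x]
        rcases abs_eq (by norm_num : (0:ℤ) ≤ 2) |>.mp h2 with h | h <;>
          rcases Int.units_eq_one_or x.1 with hu | hu <;> rw [hu] <;>
          rw [← hdiff] at h <;> omega
    · -- non-coboundary case
      have hex : ∃ a₀ : G, sg a₀ = -1 := by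
        by_contra hno
        push_neg at hno
        have hall1 : ∀ a, sg a = 1 := fun a =>
          (Int.units_eq_one_or (sg a)).resolve_right (hno a)
        have hge := Finset.card_nsmul_le_sum (Finset.univ.erase (1 : G))
          (fun a => |∑ h : G, (ψ a h : ℤ)|) 2 (fun a _ => habs a (hall1 a))
        rw [hsum, hcerase, nsmul_eq_mul] at hge
        have : ((4 * t + 1 : ℕ) : ℤ) * 2 ≤ 4 * t := hge
        omega
      obtain ⟨a₀, ha₀⟩ := hex
      -- the two sign classes have equal size 2t+1
      have hKKc : (Finset.univ.filter fun a : G => sg a = 1).card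
          = (Finset.univ.filter fun a : G => sg a = -1).card := by
        apply Finset.card_bij (fun a _ => a₀ * a)
        · intro a ha
          rw [Finset.mem_filter] at ha ⊢
          refine ⟨Finset.mem_univ _, ?_⟩
          rw [hsg_hom, ha₀, ha.2, mul_one]
        · intro a _ b _ h
          exact mul_left_cancel h
        · intro b hb
          rw [Finset.mem_filter] at hb
          refine ⟨a₀⁻¹ * b, Finset.mem_filter.mpr ⟨Finset.mem_univ _, ?_⟩,
            mul_inv_cancel_left a₀ b⟩
          have e := hsg_hom a₀ (a₀⁻¹ * b)
          rw [mul_inv_cancel_left, hb.2, ha₀] at e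
          have : (-1 : ℤˣ) * 1 = -1 * sg (a₀⁻¹ * b) := by rw [mul_one]; exact e
          exact (mul_left_cancel this).symm
      have hfneg2 : (Finset.univ.filter fun a : G => ¬ sg a = 1)
          = (Finset.univ.filter fun a : G => sg a = -1) := by
        apply Finset.filter_congr
        intro a _
        rcases Int.units_eq_one_or (sg a) with h | h <;> simp [h]
      have hsplit : (Finset.univ.filter fun a : G => sg a = 1).card
          + (Finset.univ.filter fun a : G => sg a = -1).card = 4 * t + 2 := by
        have e := Finset.card_filter_add_card_filter_not
          (s := (Finset.univ : Finset G)) (p := fun a => sg a = 1)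
        rw [hfneg2, Finset.card_univ, hG] at e
        exact e
      have hKc : (Finset.univ.filter fun a : G => sg a = -1).card = 2 * t + 1 := by omega
      -- split the excess sum along the sign classes
      have hsplit2 : ∑ a ∈ (Finset.univ.erase (1 : G)).filter (fun a => sg a = 1),
            |∑ h : G, (ψ a h : ℤ)|
          + ∑ a ∈ (Finset.univ.erase (1 : G)).filter (fun a => ¬ sg a = 1),
            |∑ h : G, (ψ a h : ℤ)| = 4 * t := by
        rw [Finset.sum_filter_add_sum_filter_not]
        exact hsum
      have hBset : (Finset.univ.erase (1 : G)).filter (fun a => ¬ sg a = 1)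
          = Finset.univ.filter (fun a : G => sg a = -1) := by
        ext a
        rw [Finset.mem_filter, Finset.mem_filter, Finset.mem_erase]
        constructor
        · rintro ⟨⟨-, -⟩, hnot⟩
          exact ⟨Finset.mem_univ _, (Int.units_eq_one_or _).resolve_left hnot⟩
        · rintro ⟨-, hm1⟩
          refine ⟨⟨?_, Finset.mem_univ _⟩, ?_⟩
          · intro h; rw [h, hsg1] at hm1; exact absurd hm1 (by decide)
          · intro h; rw [h] at hm1; exact absurd hm1 (by decide)
      have hAcard : ((Finset.univ.erase (1 : G)).filter (fun a => sg a = 1)).card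
          = 2 * t := by
        rw [Finset.filter_erase (p := fun a : G => sg a = 1) 1 Finset.univ,
          Finset.card_erase_of_mem
            (show (1 : G) ∈ Finset.univ.filter (fun a : G => sg a = 1) from
              Finset.mem_filter.mpr ⟨Finset.mem_univ _, hsg1⟩)]
        omega
      have hA_ge := Finset.card_nsmul_le_sum
        ((Finset.univ.erase (1 : G)).filter (fun a => sg a = 1))
        (fun a => |∑ h : G, (ψ a h : ℤ)|) 2
        (fun a ha => habs a (Finset.mem_filter.mp ha).2)
      rw [hAcard, nsmul_eq_mul] at hA_ge
      have hB_nonneg : (0:ℤ) ≤ ∑ a ∈ (Finset.univ.erase (1 : G)).filter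
          (fun a => ¬ sg a = 1), |∑ h : G, (ψ a h : ℤ)| :=
        Finset.sum_nonneg fun a _ => abs_nonneg _
      have hB0 : ∑ a ∈ (Finset.univ.erase (1 : G)).filter (fun a => ¬ sg a = 1),
          |∑ h : G, (ψ a h : ℤ)| = 0 := by
        have h1 : ((2 * t : ℕ) : ℤ) * 2
            ≤ ∑ a ∈ (Finset.univ.erase (1 : G)).filter (fun a => sg a = 1),
              |∑ h : G, (ψ a h : ℤ)| := hA_ge
        omega
      have hB_each : ∀ a : G, sg a = -1 → ∑ h : G, (ψ a h : ℤ) = 0 := by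
        intro a ha
        have hmem : a ∈ (Finset.univ.erase (1 : G)).filter (fun a => ¬ sg a = 1) := by
          rw [hBset]
          exact Finset.mem_filter.mpr ⟨Finset.mem_univ _, ha⟩
        have := (Finset.sum_eq_zero_iff_of_nonneg fun a _ => abs_nonneg _).mp hB0 a hmem
        exact abs_eq_zero.mp this
      have hA_each : ∀ a : G, a ≠ 1 → sg a = 1 → |∑ h : G, (ψ a h : ℤ)| = 2 := by
        have hA_sum : ∑ a ∈ (Finset.univ.erase (1 : G)).filter (fun a => sg a = 1),
            |∑ h : G, (ψ a h : ℤ)| = 2 * ((2 * t : ℕ) : ℤ) := by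
          have := hsplit2
          rw [hB0, add_zero] at this
          rw [this]; push_cast; omega
        intro a ha hsa
        exact all_eq_of_sum_eq (fun a ha' => habs a (Finset.mem_filter.mp ha').2)
          (by rw [hA_sum, hAcard]) a
          (Finset.mem_filter.mpr ⟨Finset.mem_erase.mpr ⟨ha, Finset.mem_univ _⟩, hsa⟩)
      -- build `S`
      refine ⟨(Finset.univ.filter fun a : G => sg a = -1).image
          (fun a => ((1 : ℤˣ), a)), ?_, Or.inr ?_, ?_, fun hcb => absurd hcb hncb⟩
      · intro y hy
        obtain ⟨b, hb, rfl⟩ := Finset.mem_image.mp hy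
        have hbne : b ≠ 1 := by
          intro h
          have := (Finset.mem_filter.mp hb).2
          rw [h, hsg1] at this
          exact absurd this (by decide)
        exact Finset.mem_erase.mpr ⟨fun h => hbne (congrArg Prod.snd h),
          Finset.mem_image.mpr ⟨b, Finset.mem_univ _, rfl⟩⟩
      · rw [Finset.card_image_of_injective _ (fun a b h => (Prod.ext_iff.mp h).2)]
        exact hKc
      · intro x hx
        have hx2 : x.2 ≠ 1 := hout x hx
        have hmem : (∃ s' ∈ (Finset.univ.filter fun a : G => sg a = -1).image
              (fun a => ((1 : ℤˣ), a)),
            x = extMul ψ s' ((1 : ℤˣ), (1 : G)) ∨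
            x = extMul ψ s' ((-1 : ℤˣ), (1 : G))) ↔ sg x.2 = -1 := by
          constructor
          · rintro ⟨s', hs', h | h⟩ <;>
            · obtain ⟨b, hb, rfl⟩ := Finset.mem_image.mp hs'
              rw [hmulD] at h
              have : x.2 = b := congrArg Prod.snd h
              rw [this]
              exact (Finset.mem_filter.mp hb).2
          · intro hm
            refine ⟨((1 : ℤˣ), x.2), Finset.mem_image.mpr
              ⟨x.2, Finset.mem_filter.mpr ⟨Finset.mem_univ _, hm⟩, rfl⟩, ?_⟩
            rcases Int.units_eq_one_or x.1 with hu | hu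
            · exact Or.inl (by rw [hmulD]; exact Prod.ext_iff.mpr ⟨hu, rfl⟩)
            · exact Or.inr (by rw [hmulD]; exact Prod.ext_iff.mpr ⟨hu, rfl⟩)
        obtain ⟨hsum', hdiff⟩ := hpm x.2
        constructor
        · intro hS
          have hm := hmem.mp hS
          have hR0 : ∑ h : G, (ψ x.2 h : ℤ) = 0 := hB_each _ hm
          rw [hcount x]
          rw [← hdiff] at hR0
          rcases Int.units_eq_one_or x.1 with hu | hu <;> rw [hu] <;> omega
        · intro hS
          have hm : sg x.2 = 1 := by
            rcases Int.units_eq_one_or (sg x.2) with h | h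
            · exact h
            · exact absurd (hmem.mpr h) hS
          have h2 := hA_each x.2 hx2 hm
          rw [hcount x]
          rcases abs_eq (by norm_num : (0:ℤ) ≤ 2) |>.mp h2 with h | h <;>
            rcases Int.units_eq_one_or x.1 with hu | hu <;> rw [hu] <;>
            rw [← hdiff] at h <;> omega
end

section
/- Let G be an abelian group of order n = 4t+2 and D ⊆ G a k-subset with ±1-characteristic function φ (φ(x) = -1 iff x ∈ D). Then φ satisfies R_φ(g) = ±2 for all g ≠ 0 if and only if D is a (4t+2, k, k-(t+1), (4t+1)(k-t) - k(k-1))-almost difference set in G, i.e., the difference function d(g) = |D ∩ (g+D)| takes value k-t-1 for exactly (4t+1)(k-t) - k(k-1) nonzero g and value k-t for the remaining nonzero g. -/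
open Finset

/-- for `G` abelian of order `4t+2` and `D ⊆ G` a `k`-subset
with ±1-characteristic function `φ`, one has `R_φ(g) = ±2` for all `g ≠ 0`
iff `D` is a `(4t+2, k, k-(t+1), (4t+1)(k-t)-k(k-1))`-almost difference set:
the difference function `d(g) = |D ∩ (g+D)|` takes the value `k-t-1` for
exactly `(4t+1)(k-t)-k(k-1)` nonzero `g` and the value `k-t` for the
remaining nonzero `g`. -/
theorem stmt_12 (t k : ℕ) (ht : 1 ≤ t) (G : Type*) [AddCommGroup G]
    [Fintype G] [DecidableEq G] (hG : Fintype.card G = 4 * t + 2)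
    (D : Finset G) (hk : D.card = k)
    (φ : G → ℤ) (hφ : ∀ x, φ x = if x ∈ D then (-1 : ℤ) else 1) :
    (∀ g : G, g ≠ 0 →
        (∑ a : G, φ a * φ (a + g)) = 2 ∨ (∑ a : G, φ a * φ (a + g)) = -2) ↔
      ((∀ g : G, g ≠ 0 →
          ((D ∩ D.image fun a => g + a).card : ℤ) = (k : ℤ) - t - 1 ∨
          ((D ∩ D.image fun a => g + a).card : ℤ) = (k : ℤ) - t) ∧
        ((Finset.univ.filter fun g : G =>
            g ≠ 0 ∧ ((D ∩ D.image fun a => g + a).card : ℤ)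
              = (k : ℤ) - t - 1).card : ℤ)
          = (4 * t + 1) * ((k : ℤ) - t) - k * ((k : ℤ) - 1)) := by
  classical
  set dZ : G → ℤ := fun g => ((D ∩ D.image fun a => g + a).card : ℤ) with hdZ
  -- rewrite the intersection set via a filter
  have hset : ∀ g : G, D ∩ D.image (fun a => g + a)
      = (D.filter fun a => a + g ∈ D).image (fun a => a + g) := by
    intro g
    ext b
    simp only [mem_inter, mem_image, mem_filter]
    constructor
    · rintro ⟨hb, a, ha, rfl⟩
      exact ⟨a, ⟨ha, by rwa [add_comm]⟩, add_comm a g⟩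
    · rintro ⟨a, ⟨ha, hag⟩, rfl⟩
      exact ⟨hag, a, ha, add_comm g a⟩
  have hcard : ∀ g : G, (D ∩ D.image fun a => g + a).card
      = (D.filter fun a => a + g ∈ D).card := by
    intro g
    rw [hset g, card_image_of_injective _ (add_left_injective g)]
  -- characteristic function identity
  have hphi : ∀ x, φ x = 1 - 2 * (if x ∈ D then (1:ℤ) else 0) := by
    intro x; rw [hφ]; split <;> ring
  have hchi : ∑ a : G, (if a ∈ D then (1:ℤ) else 0) = (k : ℤ) := by
    rw [Finset.sum_boole]
    simp [Finset.filter_mem_eq_inter, hk]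
  have hchi' : ∀ g : G, ∑ a : G, (if a + g ∈ D then (1:ℤ) else 0) = (k : ℤ) := by
    intro g
    rw [Fintype.sum_equiv (Equiv.addRight g)
      (fun a => if a + g ∈ D then (1:ℤ) else 0)
      (fun b => if b ∈ D then (1:ℤ) else 0) (fun a => rfl)]
    exact hchi
  have hprod : ∀ g : G, ∑ a : G,
      ((if a ∈ D then (1:ℤ) else 0) * (if a + g ∈ D then (1:ℤ) else 0))
      = dZ g := by
    intro g
    have h1 : ∀ a : G, (if a ∈ D then (1:ℤ) else 0) * (if a + g ∈ D then (1:ℤ) else 0)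
        = if a ∈ D ∧ a + g ∈ D then (1:ℤ) else 0 := by
      intro a; by_cases h : a ∈ D <;> by_cases h' : a + g ∈ D <;> simp [h, h']
    simp only [h1]
    rw [Finset.sum_boole]
    have : Finset.univ.filter (fun a => a ∈ D ∧ a + g ∈ D)
        = D.filter (fun a => a + g ∈ D) := by
      ext a; simp
    rw [this]
    simp only [hdZ]
    exact_mod_cast congrArg (Nat.cast : ℕ → ℤ) (hcard g).symm
  have key : ∀ g : G, (∑ a : G, φ a * φ (a + g))
      = (4 * t + 2 : ℤ) - 4 * k + 4 * dZ g := by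
    intro g
    have : ∀ a : G, φ a * φ (a + g)
        = 1 - 2 * (if a ∈ D then (1:ℤ) else 0)
          - 2 * (if a + g ∈ D then (1:ℤ) else 0)
          + 4 * ((if a ∈ D then (1:ℤ) else 0) * (if a + g ∈ D then (1:ℤ) else 0)) := by
      intro a; rw [hphi a, hphi (a + g)]; ring
    simp only [this]
    rw [Finset.sum_add_distrib, Finset.sum_sub_distrib, Finset.sum_sub_distrib,
      ← Finset.mul_sum, ← Finset.mul_sum, ← Finset.mul_sum,
      hchi, hchi' g, hprod g]
    simp [Finset.card_univ, hG]
    ring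
  -- total sum of the difference function
  have hsum : ∑ g : G, dZ g = (k : ℤ) ^ 2 := by
    have : ∀ g : G, dZ g = ∑ a ∈ D, (if a + g ∈ D then (1:ℤ) else 0) := by
      intro g
      rw [hdZ]
      simp only [hcard g]
      rw [Finset.card_filter]
      push_cast
      rfl
    simp only [this]
    rw [Finset.sum_comm]
    have inner : ∀ a : G, ∑ g : G, (if a + g ∈ D then (1:ℤ) else 0) = (k : ℤ) := by
      intro a
      rw [Fintype.sum_equiv (Equiv.addLeft a)
        (fun g => if a + g ∈ D then (1:ℤ) else 0)
        (fun b => if b ∈ D then (1:ℤ) else 0) (fun g => rfl)]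
      exact hchi
    simp only [inner]
    rw [Finset.sum_const, hk]
    ring
  have hd0 : dZ 0 = (k : ℤ) := by
    rw [hdZ]
    have : D.image (fun a => (0:G) + a) = D := by
      simp [zero_add]
    simp [this, hk]
  -- sum over nonzero elements
  have hN : (Finset.univ.filter fun g : G => g ≠ 0) = Finset.univ.erase 0 := by
    ext g; simp [and_comm]
  have hNcard : (Finset.univ.filter fun g : G => g ≠ 0).card = 4 * t + 1 := by
    rw [hN, Finset.card_erase_of_mem (Finset.mem_univ 0), Finset.card_univ, hG]
    omega
  have hsumN : ∑ g ∈ Finset.univ.filter (fun g : G => g ≠ 0), dZ g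
      = (k : ℤ) * ((k : ℤ) - 1) := by
    have := Finset.sum_erase_add Finset.univ dZ (Finset.mem_univ (0 : G))
    rw [hN]
    have h2 : ∑ g ∈ Finset.univ.erase 0, dZ g = (∑ g : G, dZ g) - dZ 0 := by
      rw [← this]; ring
    rw [h2, hsum, hd0]; ring
  constructor
  · intro H
    have hvals : ∀ g : G, g ≠ 0 → dZ g = (k : ℤ) - t - 1 ∨ dZ g = (k : ℤ) - t := by
      intro g hg
      rcases H g hg with h | h <;> rw [key g] at h <;> [right; left] <;> linarith
    refine ⟨hvals, ?_⟩
    set N := Finset.univ.filter (fun g : G => g ≠ 0) with hNdef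
    set p : G → Prop := fun g => dZ g = (k : ℤ) - t - 1 with hp
    have hS : (Finset.univ.filter fun g : G =>
        g ≠ 0 ∧ dZ g = (k : ℤ) - t - 1) = N.filter p := by
      rw [hNdef, Finset.filter_filter]
    rw [hS]
    have hsplit := Finset.sum_filter_add_sum_filter_not N p dZ
    have hA : ∑ g ∈ N.filter p, dZ g = ((k : ℤ) - t - 1) * (N.filter p).card := by
      rw [Finset.sum_congr rfl (fun g hg => (Finset.mem_filter.mp hg).2)]
      rw [Finset.sum_const]; ring
    have hval : ∀ g ∈ N.filter (fun g => ¬ p g), dZ g = (k : ℤ) - t := by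
      intro g hg
      have hg' := Finset.mem_filter.mp hg
      have hg0 : g ≠ 0 := (Finset.mem_filter.mp hg'.1).2
      rcases hvals g hg0 with h | h
      · exact absurd h hg'.2
      · exact h
    have hB : ∑ g ∈ N.filter (fun g => ¬ p g), dZ g
        = ((k : ℤ) - t) * (N.filter (fun g => ¬ p g)).card := by
      rw [Finset.sum_congr rfl hval, Finset.sum_const]
      ring
    have hcards : (N.filter p).card + (N.filter (fun g => ¬ p g)).card = 4 * t + 1 := by
      rw [Finset.card_filter_add_card_filter_not, hNcard]
    rw [hA, hB, hsumN] at hsplit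
    have hcZ : ((N.filter p).card : ℤ) + ((N.filter (fun g => ¬ p g)).card : ℤ)
        = 4 * t + 1 := by exact_mod_cast hcards
    linear_combination ((k : ℤ) - t) * hcZ - hsplit
  · intro H g hg
    obtain ⟨H1, -⟩ := H
    rw [key g]
    rcases H1 g hg with h | h
    · right
      have h' : dZ g = (k : ℤ) - t - 1 := h
      linarith
    · left
      have h' : dZ g = (k : ℤ) - t := h
      linarith
end

section
/- Let ψ be a {±1}-valued normalized 2-cocycle on Z/(4t+2)Z which is not a coboundary, so M_ψ = M_{i_1} ∘ ⋯ ∘ M_{i_w} ∘ N where N is the back negacyclic matrix [(-1)^{⌊(i+j)/(4t+2)⌋}]. Then: (i) up to sign, the i-th row sum of M_ψ equals its (4t+4-i)-th row sum; (ii) the (2t+2)-th row sum of M_ψ is 0; (iii) ψ is quasi-orthogonal if and only if the i-th row sum of M_ψ is 0 for even i and ±2 for odd i > 1 (rows indexed 1,...,4t+2). -/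
set_option linter.unusedSectionVars false

section aux
variable {n : ℕ} [NeZero n] (ψ : ZMod n → ZMod n → ℤ)

/-- partial products of `ψ (i, 1)`. -/
def auxPhi : ℕ → ℤ := fun j => ∏ i ∈ Finset.range j, ψ (i : ZMod n) 1

variable (hval : ∀ g h, ψ g h = 1 ∨ ψ g h = -1) (hnorm : ψ 0 0 = 1)
    (hcoc : ∀ g h k, ψ g h * ψ (g + h) k = ψ g (h + k) * ψ h k)

include hval in
lemma aux_sq (g h : ZMod n) : ψ g h * ψ g h = 1 := by
  rcases hval g h with e | e <;> rw [e] <;> ring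

include hval hnorm hcoc in
lemma aux_right (g : ZMod n) : ψ g 0 = 1 := by
  have h := hcoc g 0 0
  simp only [add_zero, zero_add, hnorm, mul_one] at h
  rcases hval g 0 with e | e
  · exact e
  · rw [e] at h; norm_num at h

include hval hnorm hcoc in
lemma aux_left (k : ZMod n) : ψ 0 k = 1 := by
  have h := hcoc 0 0 k
  simp only [add_zero, zero_add] at h
  have h0 : ψ 0 0 = 1 := aux_right ψ hval hnorm hcoc 0
  rw [h0, one_mul] at h
  rcases hval 0 k with e | e
  · exact e
  · rw [e] at h; linarith

lemma auxPhi_succ (j : ℕ) : auxPhi ψ (j + 1) = auxPhi ψ j * ψ (j : ZMod n) 1 :=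
  Finset.prod_range_succ _ _

include hval in
lemma auxPhi_pm (j : ℕ) : auxPhi ψ j = 1 ∨ auxPhi ψ j = -1 := by
  induction j with
  | zero => left; rfl
  | succ k ih =>
    rw [auxPhi_succ]
    rcases ih with e | e <;> rcases hval (k : ZMod n) 1 with e2 | e2 <;>
      rw [e, e2] <;> norm_num

include hval in
lemma auxPhi_sq (j : ℕ) : auxPhi ψ j * auxPhi ψ j = 1 := by
  rcases auxPhi_pm ψ hval j with e | e <;> rw [e] <;> ring

include hval hnorm hcoc in
lemma auxPhi_add (j k : ℕ) :
    auxPhi ψ (j + k) = auxPhi ψ j * auxPhi ψ k * ψ (j : ZMod n) (k : ZMod n) := by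
  induction k with
  | zero =>
    simp only [Nat.add_zero, Nat.cast_zero]
    rw [aux_right ψ hval hnorm hcoc]
    simp [auxPhi]
  | succ k ih =>
    have h1 : j + (k + 1) = (j + k) + 1 := by omega
    rw [h1, auxPhi_succ, ih, auxPhi_succ]
    have hc : ψ (j : ZMod n) (k : ZMod n) * ψ ((j : ZMod n) + (k : ZMod n)) 1
        = ψ (j : ZMod n) ((k : ZMod n) + 1) * ψ (k : ZMod n) 1 := hcoc _ _ _
    have hcast : ((j + k : ℕ) : ZMod n) = (j : ZMod n) + (k : ZMod n) := by push_cast; ring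
    have hcast2 : ((k + 1 : ℕ) : ZMod n) = (k : ZMod n) + 1 := by push_cast; ring
    rw [hcast, hcast2]
    calc auxPhi ψ j * auxPhi ψ k * ψ (j : ZMod n) (k : ZMod n) * ψ ((j : ZMod n) + (k : ZMod n)) 1
        = auxPhi ψ j * auxPhi ψ k * (ψ (j : ZMod n) (k : ZMod n) * ψ ((j : ZMod n) + (k : ZMod n)) 1) := by ring
      _ = auxPhi ψ j * auxPhi ψ k * (ψ (j : ZMod n) ((k : ZMod n) + 1) * ψ (k : ZMod n) 1) := by rw [hc]
      _ = auxPhi ψ j * (auxPhi ψ k * ψ (k : ZMod n) 1) * ψ (j : ZMod n) ((k : ZMod n) + 1) := by ring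

include hval hnorm hcoc in
lemma aux_psi_eq (j k : ℕ) :
    ψ (j : ZMod n) (k : ZMod n) = auxPhi ψ j * auxPhi ψ k * auxPhi ψ (j + k) := by
  have h := auxPhi_add ψ hval hnorm hcoc j k
  have s1 := auxPhi_sq ψ hval j
  have s2 := auxPhi_sq ψ hval k
  calc ψ (j : ZMod n) (k : ZMod n)
      = (auxPhi ψ j * auxPhi ψ j) * (auxPhi ψ k * auxPhi ψ k) * ψ (j : ZMod n) (k : ZMod n) := by
        rw [s1, s2]; ring
    _ = auxPhi ψ j * auxPhi ψ k * (auxPhi ψ j * auxPhi ψ k * ψ (j : ZMod n) (k : ZMod n)) := by ring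
    _ = auxPhi ψ j * auxPhi ψ k * auxPhi ψ (j + k) := by rw [← h]

include hval hnorm hcoc in
lemma auxPhi_natCast_n (j : ℕ) : auxPhi ψ (j + n) = auxPhi ψ j * auxPhi ψ n := by
  rw [auxPhi_add ψ hval hnorm hcoc j n]
  have : ((n : ℕ) : ZMod n) = 0 := ZMod.natCast_self n
  rw [this, aux_right ψ hval hnorm hcoc, mul_one]

include hval hnorm hcoc in
lemma auxPhi_mod (heps : auxPhi ψ n = 1) (j : ℕ) : auxPhi ψ j = auxPhi ψ (j % n) := by
  conv_lhs => rw [← Nat.mod_add_div j n]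
  generalize j / n = q
  induction q with
  | zero => rw [Nat.mul_zero, Nat.add_zero]
  | succ q ih =>
    have h2 : j % n + n * (q + 1) = (j % n + n * q) + n := by ring
    rw [h2, auxPhi_natCast_n ψ hval hnorm hcoc, heps, mul_one, ih]

include hval hnorm hcoc in
lemma aux_eps
    (hnotcob : ¬ ∃ φ : ZMod n → ℤ, φ 0 = 1 ∧ (∀ x, φ x = 1 ∨ φ x = -1) ∧
      ∀ g h, ψ g h = φ g * φ h * φ (g + h)) :
    auxPhi ψ n = -1 := by
  rcases auxPhi_pm ψ hval n with heps | heps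
  · exfalso
    apply hnotcob
    refine ⟨fun x => auxPhi ψ x.val, ?_, fun x => auxPhi_pm ψ hval x.val, ?_⟩
    · simp [auxPhi, ZMod.val_zero]
    · intro g h
      have hg : ((g.val : ℕ) : ZMod n) = g := by simp [ZMod.natCast_val, ZMod.cast_id]
      have hh : ((h.val : ℕ) : ZMod n) = h := by simp [ZMod.natCast_val, ZMod.cast_id]
      have key := aux_psi_eq ψ hval hnorm hcoc g.val h.val
      rw [hg, hh] at key
      rw [key]
      congr 1
      rw [auxPhi_mod ψ hval hnorm hcoc heps (g.val + h.val)]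
      simp only [ZMod.val_add]
  · exact heps

lemma aux_zsum (f : ZMod n → ℤ) : ∑ h, f h = ∑ k ∈ Finset.range n, f (k : ZMod n) := by
  apply Finset.sum_nbij' (fun h : ZMod n => h.val) (fun k : ℕ => (k : ZMod n))
  · intro a _; exact Finset.mem_range.mpr (ZMod.val_lt a)
  · intro a _; exact Finset.mem_univ _
  · intro a _; simp [ZMod.natCast_val, ZMod.cast_id]
  · intro a ha; exact ZMod.val_cast_of_lt (Finset.mem_range.mp ha)
  · intro a _; simp [ZMod.natCast_val, ZMod.cast_id]

end aux

section aux4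
variable {α : Type*} [DecidableEq α]

lemma aux_prod_pm (s : Finset α) (f : α → ℤ) (h : ∀ a ∈ s, f a = 1 ∨ f a = -1) :
    (∏ a ∈ s, f a) = 1 ∨ (∏ a ∈ s, f a) = -1 := by
  induction s using Finset.induction_on with
  | empty => left; simp
  | insert a s' ha ih =>
    rw [Finset.prod_insert ha]
    rcases h a (Finset.mem_insert_self a s') with e | e <;>
      rcases ih (fun x hx => h x (Finset.mem_insert_of_mem hx)) with e2 | e2 <;>
      rw [e, e2] <;> norm_num

lemma aux_sum_pm_mod4 (s : Finset α) (f : α → ℤ) (h : ∀ a ∈ s, f a = 1 ∨ f a = -1) :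
    (4 : ℤ) ∣ (∑ a ∈ s, f a) - ((s.card : ℤ) - 1 + ∏ a ∈ s, f a) := by
  induction s using Finset.induction_on with
  | empty => simp
  | insert a s' ha ih =>
    have hs' := fun x hx => h x (Finset.mem_insert_of_mem hx)
    have ihd := ih hs'
    rw [Finset.prod_insert ha, Finset.sum_insert ha, Finset.card_insert_of_notMem ha]
    have key : (4 : ℤ) ∣ (f a - 1) * (1 - ∏ x ∈ s', f x) := by
      rcases h a (Finset.mem_insert_self a s') with e | e <;>
        rcases aux_prod_pm s' f hs' with e2 | e2 <;> rw [e, e2] <;> norm_num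
    have expand : f a + (∑ x ∈ s', f x) - (((s'.card : ℤ) + 1) - 1 + f a * ∏ x ∈ s', f x)
        = ((∑ x ∈ s', f x) - ((s'.card : ℤ) - 1 + ∏ x ∈ s', f x))
          + (f a - 1) * (1 - ∏ x ∈ s', f x) := by ring
    push_cast
    rw [expand]
    exact dvd_add ihd key
end aux4

section aux5
variable (n : ℕ) (Φ : ℕ → ℤ) (hpm : ∀ j, Φ j = 1 ∨ Φ j = -1)
    (hanti : ∀ j, Φ (j + n) = -Φ j)

include hpm hanti in
lemma auxP_succ (x : ℕ) :
    (∏ k ∈ Finset.range n, Φ (x + 1 + k)) = -∏ k ∈ Finset.range n, Φ (x + k) := by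
  have h1 : (∏ k ∈ Finset.range (n + 1), Φ (x + k))
      = (∏ k ∈ Finset.range n, Φ (x + k)) * Φ (x + n) := Finset.prod_range_succ _ _
  have h2 : (∏ k ∈ Finset.range (n + 1), Φ (x + k))
      = (∏ k ∈ Finset.range n, Φ (x + (k + 1))) * Φ (x + 0) := Finset.prod_range_succ' _ _
  have h3 : (∏ k ∈ Finset.range n, Φ (x + (k + 1))) = ∏ k ∈ Finset.range n, Φ (x + 1 + k) := by
    apply Finset.prod_congr rfl; intro k _; congr 1; ring
  have hsq : Φ x * Φ x = 1 := by rcases hpm x with e | e <;> rw [e] <;> ring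
  have h4 : (∏ k ∈ Finset.range n, Φ (x + 1 + k)) * Φ x
      = (∏ k ∈ Finset.range n, Φ (x + k)) * Φ (x + n) := by
    rw [← h3, ← h1, h2, Nat.add_zero]
  calc (∏ k ∈ Finset.range n, Φ (x + 1 + k))
      = (∏ k ∈ Finset.range n, Φ (x + 1 + k)) * (Φ x * Φ x) := by rw [hsq, mul_one]
    _ = ((∏ k ∈ Finset.range n, Φ (x + 1 + k)) * Φ x) * Φ x := by ring
    _ = ((∏ k ∈ Finset.range n, Φ (x + k)) * Φ (x + n)) * Φ x := by rw [h4]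
    _ = -((∏ k ∈ Finset.range n, Φ (x + k)) * (Φ x * Φ x)) := by rw [hanti x]; ring
    _ = -∏ k ∈ Finset.range n, Φ (x + k) := by rw [hsq, mul_one]

include hpm hanti in
lemma auxP_pow (x : ℕ) :
    (∏ k ∈ Finset.range n, Φ (x + k)) = (-1 : ℤ) ^ x * ∏ k ∈ Finset.range n, Φ k := by
  induction x with
  | zero => simp
  | succ x ih =>
    rw [auxP_succ n Φ hpm hanti x, ih, pow_succ]
    ring

include hpm hanti in
lemma auxS_mod4 (x : ℕ) :
    (4 : ℤ) ∣ (∑ k ∈ Finset.range n, Φ k * Φ (x + k)) - ((n : ℤ) - 1 + (-1 : ℤ) ^ x) := by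
  have hterm : ∀ k ∈ Finset.range n, Φ k * Φ (x + k) = 1 ∨ Φ k * Φ (x + k) = -1 := by
    intro k _
    rcases hpm k with e | e <;> rcases hpm (x + k) with e2 | e2 <;> rw [e, e2] <;> norm_num
  have h := aux_sum_pm_mod4 (Finset.range n) (fun k => Φ k * Φ (x + k)) hterm
  have hsqP : (∏ k ∈ Finset.range n, Φ k) * (∏ k ∈ Finset.range n, Φ k) = 1 := by
    rcases aux_prod_pm (Finset.range n) Φ (fun a _ => hpm a) with e | e <;> rw [e] <;> ring
  have hprod : (∏ k ∈ Finset.range n, Φ k * Φ (x + k)) = (-1 : ℤ) ^ x := by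
    rw [Finset.prod_mul_distrib, auxP_pow n Φ hpm hanti x]
    calc (∏ k ∈ Finset.range n, Φ k) * ((-1 : ℤ) ^ x * ∏ k ∈ Finset.range n, Φ k)
        = (-1 : ℤ) ^ x * ((∏ k ∈ Finset.range n, Φ k) * ∏ k ∈ Finset.range n, Φ k) := by ring
      _ = (-1 : ℤ) ^ x := by rw [hsqP, mul_one]
  rw [hprod] at h
  simpa using h
end aux5

lemma aux_even_count (m : ℕ) :
    (∑ k ∈ Finset.range (2 * m), if Even k then (2 : ℤ) else 0) = 2 * m := by
  induction m with
  | zero => simp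
  | succ m ih =>
    have h : 2 * (m + 1) = (2 * m + 1) + 1 := by ring
    rw [h, Finset.sum_range_succ, Finset.sum_range_succ, ih]
    have h1 : ¬ Even (2 * m + 1) := by simp [Nat.even_add_one]
    have h2 : Even (2 * m) := even_two_mul m
    rw [if_neg h1, if_pos h2]
    push_cast
    ring


/-- for a normalized ±1 cocycle `ψ` over `ℤ/(4t+2)ℤ` which is
not a coboundary (so `M_ψ = M_{i₁} ∘ ⋯ ∘ M_{i_w} ∘ N`): indexing rows
`1, …, 4t+2` by the group elements `0, 1, …, 4t+1`, (i) up to sign the `i`-th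
row sum equals the `(4t+4-i)`-th row sum (i.e. the row sums at `x` and `-x`
agree in absolute value); (ii) the `(2t+2)`-th row sum (the row of the element
`2t+1`) is `0`; (iii) `ψ` is quasi-orthogonal (row excess `4t`) iff the
`i`-th row sum is `0` for even `i` (elements of odd value) and `±2` for odd
`i > 1` (nonzero elements of even value). -/
theorem stmt_13 (t : ℕ) (ht : 1 ≤ t) [NeZero (4 * t + 2)]
    (ψ : ZMod (4 * t + 2) → ZMod (4 * t + 2) → ℤ)
    (hval : ∀ g h, ψ g h = 1 ∨ ψ g h = -1) (hnorm : ψ 0 0 = 1)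
    (hcoc : ∀ g h k, ψ g h * ψ (g + h) k = ψ g (h + k) * ψ h k)
    (hnotcob : ¬ ∃ φ : ZMod (4 * t + 2) → ℤ, φ 0 = 1 ∧
      (∀ x, φ x = 1 ∨ φ x = -1) ∧
      ∀ g h, ψ g h = φ g * φ h * φ (g + h)) :
    (∀ x : ZMod (4 * t + 2),
      |∑ h, ψ x h| = |∑ h, ψ (-x) h|) ∧
    (∑ h, ψ ((2 * t + 1 : ℕ) : ZMod (4 * t + 2)) h) = 0 ∧
    ((∑ g ∈ Finset.univ.erase (0 : ZMod (4 * t + 2)), |∑ h, ψ g h|)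
        = 4 * t ↔
      ∀ x : ZMod (4 * t + 2), x ≠ 0 →
        (Odd x.val → (∑ h, ψ x h) = 0) ∧
        (Even x.val → (∑ h, ψ x h) = 2 ∨ (∑ h, ψ x h) = -2)) := by
  have hpm : ∀ j, auxPhi ψ j = 1 ∨ auxPhi ψ j = -1 := auxPhi_pm ψ hval
  have heps : auxPhi ψ (4 * t + 2) = -1 := aux_eps ψ hval hnorm hcoc hnotcob
  have hanti : ∀ j, auxPhi ψ (j + (4 * t + 2)) = -auxPhi ψ j := by
    intro j
    rw [auxPhi_natCast_n ψ hval hnorm hcoc j, heps, mul_neg_one]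
  -- Part (i)
  have parti : ∀ x : ZMod (4 * t + 2), (∑ h, ψ x h) = ψ x (-x) * ∑ h, ψ (-x) h := by
    intro x
    have key : ∀ k : ZMod (4 * t + 2), ψ x (-x + k) = ψ x (-x) * ψ (-x) k := by
      intro k
      have h := hcoc x (-x) k
      rw [add_neg_cancel, aux_left ψ hval hnorm hcoc k, mul_one] at h
      have sq := aux_sq ψ hval (-x) k
      calc ψ x (-x + k) = ψ x (-x + k) * (ψ (-x) k * ψ (-x) k) := by rw [sq, mul_one]
        _ = (ψ x (-x + k) * ψ (-x) k) * ψ (-x) k := by ring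
        _ = ψ x (-x) * ψ (-x) k := by rw [← h]
    calc (∑ h, ψ x h) = ∑ k, ψ x (-x + k) :=
        (Fintype.sum_equiv (Equiv.addLeft (-x)) _ _ (fun k => rfl)).symm
      _ = ∑ k, ψ x (-x) * ψ (-x) k := Finset.sum_congr rfl (fun k _ => key k)
      _ = ψ x (-x) * ∑ k, ψ (-x) k := by rw [← Finset.mul_sum]
  have parti_abs : ∀ x : ZMod (4 * t + 2), |∑ h, ψ x h| = |∑ h, ψ (-x) h| := by
    intro x
    rw [parti x, abs_mul]
    rcases hval x (-x) with e | e <;> rw [e] <;> norm_num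
  -- Part (ii)
  have hm_add : ((2 * t + 1 : ℕ) : ZMod (4 * t + 2)) + ((2 * t + 1 : ℕ) : ZMod (4 * t + 2)) = 0 := by
    have h1 : ((2 * t + 1 : ℕ) : ZMod (4 * t + 2)) + ((2 * t + 1 : ℕ) : ZMod (4 * t + 2))
        = ((4 * t + 2 : ℕ) : ZMod (4 * t + 2)) := by push_cast; ring
    rw [h1, ZMod.natCast_self]
  have hm_neg : -((2 * t + 1 : ℕ) : ZMod (4 * t + 2)) = ((2 * t + 1 : ℕ) : ZMod (4 * t + 2)) :=
    neg_eq_of_add_eq_zero_left hm_add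
  have hpsi_mm : ψ ((2 * t + 1 : ℕ) : ZMod (4 * t + 2)) ((2 * t + 1 : ℕ) : ZMod (4 * t + 2)) = -1 := by
    rw [aux_psi_eq ψ hval hnorm hcoc (2 * t + 1) (2 * t + 1)]
    have h2 : 2 * t + 1 + (2 * t + 1) = 4 * t + 2 := by omega
    rw [h2, heps, auxPhi_sq ψ hval (2 * t + 1)]
    ring
  have partii : (∑ h, ψ ((2 * t + 1 : ℕ) : ZMod (4 * t + 2)) h) = 0 := by
    have h := parti ((2 * t + 1 : ℕ) : ZMod (4 * t + 2))
    rw [hm_neg, hpsi_mm] at h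
    linarith
  -- Row sum formula and mod-4 facts
  have hRS : ∀ x : ZMod (4 * t + 2), (∑ h, ψ x h)
      = auxPhi ψ x.val * ∑ k ∈ Finset.range (4 * t + 2), auxPhi ψ k * auxPhi ψ (x.val + k) := by
    intro x
    rw [aux_zsum (fun h => ψ x h), Finset.mul_sum]
    apply Finset.sum_congr rfl
    intro k _
    have hg : ((x.val : ℕ) : ZMod (4 * t + 2)) = x := by simp [ZMod.natCast_val, ZMod.cast_id]
    have key := aux_psi_eq ψ hval hnorm hcoc x.val k
    rw [hg] at key
    rw [key]
    ring
  have heven : ∀ x : ZMod (4 * t + 2), Even x.val →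
      (4 : ℤ) ∣ (∑ h, ψ x h) - 2 ∨ (4 : ℤ) ∣ (∑ h, ψ x h) + 2 := by
    intro x hx
    have hS := auxS_mod4 (4 * t + 2) (auxPhi ψ) hpm hanti x.val
    rw [hx.neg_one_pow] at hS
    have hS2 : (4 : ℤ) ∣ (∑ k ∈ Finset.range (4 * t + 2), auxPhi ψ k * auxPhi ψ (x.val + k)) - 2 := by
      obtain ⟨d, hd⟩ := hS
      refine ⟨d + t, ?_⟩
      push_cast at hd
      linarith
    rw [hRS x]
    rcases hpm x.val with e | e <;> rw [e]
    · left; simpa using hS2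
    · right
      obtain ⟨d, hd⟩ := hS2
      exact ⟨-d, by linarith⟩
  have heven_ge : ∀ x : ZMod (4 * t + 2), Even x.val → 2 ≤ |∑ h, ψ x h| := by
    intro x hx
    rcases heven x hx with ⟨d, hd⟩ | ⟨d, hd⟩ <;>
      rcases abs_cases (∑ h, ψ x h) with ⟨h1, _⟩ | ⟨h1, _⟩ <;> omega
  -- bookkeeping
  have hle : ∀ g ∈ Finset.univ.erase (0 : ZMod (4 * t + 2)),
      (if Even g.val then (2 : ℤ) else 0) ≤ |∑ h, ψ g h| := by
    intro g _
    by_cases he : Even g.val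
    · rw [if_pos he]; exact heven_ge g he
    · rw [if_neg he]; exact abs_nonneg _
  have hcsum : (∑ g ∈ Finset.univ.erase (0 : ZMod (4 * t + 2)),
      (if Even g.val then (2 : ℤ) else 0)) = 4 * t := by
    have h0 : (if Even (0 : ZMod (4 * t + 2)).val then (2 : ℤ) else 0) = 2 := by
      simp [ZMod.val_zero]
    have htot : (∑ g : ZMod (4 * t + 2), (if Even g.val then (2 : ℤ) else 0)) = 4 * t + 2 := by
      rw [aux_zsum (fun g : ZMod (4 * t + 2) => if Even g.val then (2 : ℤ) else 0)]
      have hcongr : ∀ k ∈ Finset.range (4 * t + 2),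
          (if Even ((k : ZMod (4 * t + 2))).val then (2 : ℤ) else 0)
            = if Even k then (2 : ℤ) else 0 := by
        intro k hk
        rw [ZMod.val_cast_of_lt (Finset.mem_range.mp hk)]
      rw [Finset.sum_congr rfl hcongr]
      have h2 : 4 * t + 2 = 2 * (2 * t + 1) := by omega
      rw [h2, aux_even_count]
      push_cast; ring
    have hsplit := Finset.sum_erase_add Finset.univ
      (fun g : ZMod (4 * t + 2) => if Even g.val then (2 : ℤ) else 0)
      (Finset.mem_univ (0 : ZMod (4 * t + 2)))
    simp only [h0] at hsplit
    rw [htot] at hsplit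
    linarith
  refine ⟨parti_abs, partii, ?_⟩
  have hiff := Finset.sum_eq_sum_iff_of_le hle
  constructor
  · intro hsum x hx
    have hall : ∀ g ∈ Finset.univ.erase (0 : ZMod (4 * t + 2)),
        (if Even g.val then (2 : ℤ) else 0) = |∑ h, ψ g h| := by
      apply hiff.mp
      rw [hcsum, hsum]
    have hx' : x ∈ Finset.univ.erase (0 : ZMod (4 * t + 2)) :=
      Finset.mem_erase.mpr ⟨hx, Finset.mem_univ x⟩
    have hxe := (hall x hx').symm
    constructor
    · intro hodd
      rw [if_neg (Nat.not_even_iff_odd.mpr hodd)] at hxe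
      exact abs_eq_zero.mp hxe
    · intro hev
      rw [if_pos hev] at hxe
      exact (abs_eq (by norm_num)).mp hxe
  · intro hcond
    rw [← hcsum]
    apply Finset.sum_congr rfl
    intro g hg
    have hg0 : g ≠ 0 := (Finset.mem_erase.mp hg).1
    rcases Nat.even_or_odd g.val with he | ho
    · have := (hcond g hg0).2 he
      rw [if_pos he]
      rcases this with e | e <;> rw [e] <;> norm_num
    · have := (hcond g hg0).1 ho
      rw [if_neg (Nat.not_even_iff_odd.mpr ho), this]
      simp
end

section
/- Let ψ = γ ∏_{j=1}^w ∂_{i_j} be a quasi-orthogonal cocycle over Z/(4t+2)Z, where γ is the back negacyclic cocycle γ(j,k)=(-1)^{⌊(j+k)/(4t+2)⌋} and the ∂_{i_j} are distinct elementary coboundaries with 2 ≤ i_j ≤ 4t+2. Then t ≤ w ≤ 3t+1. -/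
open Finset

namespace Stmt14

/-- negacyclic autocorrelation of the sequence `b` -/
def Abar (n : ℕ) (b : ℕ → ℤ) (d : ℕ) : ℤ := ∑ j ∈ range n, b j * b (j + d)

/-- window sums of length `n` -/
def W (n : ℕ) (b : ℕ → ℤ) (k : ℕ) : ℤ := ∑ j ∈ range n, b (k + j)

lemma sum_periodic_shift (n : ℕ) (p : ℕ → ℤ) (hp : ∀ j, p (j + n) = p j) :
    ∀ m, ∑ j ∈ range n, p (j + m) = ∑ j ∈ range n, p j := by
  intro m
  induction m with
  | zero => simp
  | succ m ih =>
    have h1 : ∑ j ∈ range (n+1), p (j + m)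
        = (∑ j ∈ range n, p ((j+1) + m)) + p m := by
      rw [Finset.sum_range_succ']; simp
    have h2 : ∑ j ∈ range (n+1), p (j + m)
        = (∑ j ∈ range n, p (j + m)) + p (n + m) := by
      rw [Finset.sum_range_succ]
    have h3 : p (n + m) = p m := by rw [Nat.add_comm n m]; exact hp m
    have h4 : ∑ j ∈ range n, p ((j+1) + m) = ∑ j ∈ range n, p (j + m) := by omega
    calc ∑ j ∈ range n, p (j + (m+1)) = ∑ j ∈ range n, p ((j+1) + m) := by
          apply Finset.sum_congr rfl; intro j _; ring_nf
      _ = ∑ j ∈ range n, p (j + m) := h4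
      _ = ∑ j ∈ range n, p j := ih

section Seq

variable (n : ℕ) (b : ℕ → ℤ) (hbn : ∀ m, b (m + n) = - b m)
  (hb1 : ∀ m, b m = 1 ∨ b m = -1)

include hbn in
lemma prod_periodic (d : ℕ) : ∀ j, b (j + n) * b ((j + n) + d) = b j * b (j + d) := by
  intro j
  have h1 : b ((j + n) + d) = - b (j + d) := by
    have he : (j + n) + d = (j + d) + n := by ring
    rw [he, hbn]
  rw [hbn, h1]; ring

include hbn in
lemma Abar_shift (d m : ℕ) :
    ∑ j ∈ range n, b (j + m) * b ((j + m) + d) = Abar n b d :=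
  sum_periodic_shift n (fun j => b j * b (j + d)) (prod_periodic n b hbn d) m

include hbn in
lemma Abar_antisym (d : ℕ) (hd : d ≤ n) : Abar n b (n - d) = - Abar n b d := by
  have h1 : ∑ j ∈ range n, b (j + d) * b ((j + d) + (n - d)) = Abar n b (n - d) :=
    Abar_shift n b hbn (n - d) d
  have h3 : ∑ j ∈ range n, b (j + d) * b ((j + d) + (n - d))
      = - ∑ j ∈ range n, b j * b (j + d) := by
    rw [← Finset.sum_neg_distrib]
    apply Finset.sum_congr rfl
    intro j _
    have he : (j + d) + (n - d) = j + n := by omega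
    rw [he, hbn]; ring
  rw [← h1, h3]; rfl

include hb1 in
lemma b_sq (m : ℕ) : b m * b m = 1 := by rcases hb1 m with h | h <;> rw [h] <;> ring

include hb1 in
lemma q_pm (k j : ℕ) : b j * b (j + k) = 1 ∨ b j * b (j + k) = -1 := by
  rcases hb1 j with h | h <;> rcases hb1 (j + k) with h' | h' <;> rw [h, h'] <;> simp

include hb1 in
lemma Abar_zero : Abar n b 0 = (n : ℤ) := by
  rw [Abar]
  have h : ∀ j ∈ range n, b j * b (j + 0) = 1 := by
    intro j _; rw [Nat.add_zero]; exact b_sq b hb1 j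
  rw [Finset.sum_congr rfl h, Finset.sum_const, Finset.card_range, nsmul_eq_mul, mul_one]

include hbn hb1 in
lemma prod_b_shift : ∀ k, ∏ j ∈ range n, b (j + k) = (-1)^k * ∏ j ∈ range n, b j := by
  intro k
  induction k with
  | zero => simp
  | succ k ih =>
    have h1 : ∏ j ∈ range (n+1), b (j + k)
        = (∏ j ∈ range n, b ((j+1) + k)) * b k := by
      rw [Finset.prod_range_succ']; simp
    have h2 : ∏ j ∈ range (n+1), b (j + k)
        = (∏ j ∈ range n, b (j + k)) * b (n + k) := by
      rw [Finset.prod_range_succ]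
    have h3 : b (n + k) = - b k := by rw [Nat.add_comm n k]; exact hbn k
    have h4 : (∏ j ∈ range n, b ((j+1) + k)) * b k
        = - (∏ j ∈ range n, b (j + k)) * b k := by
      rw [← h1, h2, h3]; ring
    have h5 : ∏ j ∈ range n, b ((j+1) + k) = - ∏ j ∈ range n, b (j + k) := by
      calc ∏ j ∈ range n, b ((j+1) + k)
          = (∏ j ∈ range n, b ((j+1) + k)) * (b k * b k) := by rw [b_sq b hb1]; ring
        _ = ((∏ j ∈ range n, b ((j+1) + k)) * b k) * b k := by ring
        _ = (- (∏ j ∈ range n, b (j + k)) * b k) * b k := by rw [h4]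
        _ = - (∏ j ∈ range n, b (j + k)) * (b k * b k) := by ring
        _ = - ∏ j ∈ range n, b (j + k) := by rw [b_sq b hb1]; ring
    calc ∏ j ∈ range n, b (j + (k+1)) = ∏ j ∈ range n, b ((j+1) + k) := by
          apply Finset.prod_congr rfl; intro j _; congr 1; ring
      _ = - ∏ j ∈ range n, b (j + k) := h5
      _ = - ((-1)^k * ∏ j ∈ range n, b j) := by rw [ih]
      _ = (-1)^(k+1) * ∏ j ∈ range n, b j := by ring

include hbn hb1 in
lemma Abar_parity (k : ℕ) :
    ∃ c : ℕ, Abar n b k = (n : ℤ) - 2 * c ∧ (-1 : ℤ)^c = (-1)^k := by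
  classical
  set q : ℕ → ℤ := fun j => b j * b (j + k) with hq
  set T := (range n).filter (fun j => q j = -1) with hT
  set T' := (range n).filter (fun j => ¬ (q j = -1)) with hT'
  have hcard : T.card + T'.card = n := by
    rw [hT, hT']
    rw [Finset.card_filter_add_card_filter_not, Finset.card_range]
  have hq1 : ∀ j ∈ T', q j = 1 := by
    intro j hj
    rw [hT', Finset.mem_filter] at hj
    rcases q_pm b hb1 k j with h | h
    · exact h
    · exact absurd h hj.2
  refine ⟨T.card, ?_, ?_⟩
  · have hsum : Abar n b k = (∑ j ∈ T, q j) + ∑ j ∈ T', q j := by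
      rw [Abar, ← Finset.sum_filter_add_sum_filter_not (range n) (fun j => q j = -1)]
    have h1 : ∑ j ∈ T, q j = - (T.card : ℤ) := by
      have he : ∑ j ∈ T, q j = ∑ _j ∈ T, (-1 : ℤ) :=
        Finset.sum_congr rfl (fun j hj => by rw [hT, Finset.mem_filter] at hj; exact hj.2)
      rw [he, Finset.sum_const]; simp
    have h2 : ∑ j ∈ T', q j = (T'.card : ℤ) := by
      have he : ∑ j ∈ T', q j = ∑ _j ∈ T', (1 : ℤ) := Finset.sum_congr rfl hq1
      rw [he, Finset.sum_const]; simp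
    rw [hsum, h1, h2]
    have : (T.card : ℤ) + (T'.card : ℤ) = (n : ℤ) := by exact_mod_cast hcard
    linarith
  · have hprod : ∏ j ∈ range n, q j = (∏ j ∈ T, q j) * ∏ j ∈ T', q j := by
      rw [← Finset.prod_filter_mul_prod_filter_not (range n) (fun j => q j = -1)]
    have h1 : ∏ j ∈ T, q j = (-1 : ℤ)^T.card := by
      have he : ∏ j ∈ T, q j = ∏ _j ∈ T, (-1 : ℤ) :=
        Finset.prod_congr rfl (fun j hj => by rw [hT, Finset.mem_filter] at hj; exact hj.2)
      rw [he, Finset.prod_const]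
    have h2 : ∏ j ∈ T', q j = 1 := by
      have he : ∏ j ∈ T', q j = ∏ _j ∈ T', (1 : ℤ) := Finset.prod_congr rfl hq1
      rw [he, Finset.prod_const, one_pow]
    have h3 : ∏ j ∈ range n, q j = (-1 : ℤ)^k := by
      have hd : ∏ j ∈ range n, q j = (∏ j ∈ range n, b j) * ∏ j ∈ range n, b (j + k) := by
        rw [hq, ← Finset.prod_mul_distrib]
      rw [hd, prod_b_shift n b hbn hb1 k]
      have hP : (∏ j ∈ range n, b j) * (∏ j ∈ range n, b j) = 1 := by
        rw [← Finset.prod_mul_distrib]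
        rw [Finset.prod_congr rfl (fun j _ => b_sq b hb1 j)]
        simp
      calc (∏ j ∈ range n, b j) * ((-1)^k * ∏ j ∈ range n, b j)
          = (-1)^k * ((∏ j ∈ range n, b j) * (∏ j ∈ range n, b j)) := by ring
        _ = (-1 : ℤ)^k := by rw [hP]; ring
    rw [← h3, hprod, h1, h2, mul_one]

include hbn hb1 in
lemma Abar_even_ge (t k : ℕ) (hn : n = 4*t + 2) (hk : Even k) : 2 ≤ |Abar n b k| := by
  obtain ⟨c, hc, hpar⟩ := Abar_parity n b hbn hb1 k
  have hceven : Even c := by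
    have h1 : (-1 : ℤ)^k = 1 := Even.neg_one_pow hk
    rw [h1] at hpar
    rcases Nat.even_or_odd c with h | h
    · exact h
    · exfalso; rw [Odd.neg_one_pow h] at hpar; norm_num at hpar
  obtain ⟨c', hc'⟩ := hceven
  have habar : Abar n b k = 2 * (2 * ((t : ℤ) - c') + 1) := by
    rw [hc, hn, hc']; push_cast; ring
  have hne : 2 * ((t : ℤ) - c') + 1 ≠ 0 := by omega
  rw [habar, abs_mul]
  have h1 : 1 ≤ |2 * ((t : ℤ) - c') + 1| := by
    rcases abs_cases (2 * ((t : ℤ) - c') + 1) with ⟨h1, _⟩ | ⟨h1, _⟩ <;> omega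
  calc (2:ℤ) = 2 * 1 := by ring
    _ ≤ |2| * |2 * ((t : ℤ) - c') + 1| := by
        rw [show |(2:ℤ)| = 2 by norm_num]
        exact mul_le_mul_of_nonneg_left h1 (by norm_num)

include hbn in
lemma inner_eval (j j' : ℕ) :
    ∑ k ∈ range n, b (k + j) * b (k + j') = Abar n b ((j' - j) + (j - j')) := by
  rcases Nat.le_total j j' with h | h
  · have hd : (j' - j) + (j - j') = j' - j := by omega
    rw [hd]
    calc ∑ k ∈ range n, b (k + j) * b (k + j')
        = ∑ k ∈ range n, b (k + j) * b ((k + j) + (j' - j)) := by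
          apply Finset.sum_congr rfl; intro k _; congr 2; omega
      _ = Abar n b (j' - j) := Abar_shift n b hbn (j' - j) j
  · have hd : (j' - j) + (j - j') = j - j' := by omega
    rw [hd]
    calc ∑ k ∈ range n, b (k + j) * b (k + j')
        = ∑ k ∈ range n, b (k + j') * b ((k + j') + (j - j')) := by
          apply Finset.sum_congr rfl; intro k _
          rw [mul_comm]; congr 2; omega
      _ = Abar n b (j - j') := Abar_shift n b hbn (j - j') j'

include hbn in
lemma W_succ (k : ℕ) : W n b (k + 1) = W n b k - 2 * b k := by
  have h1 : ∑ j ∈ range (n+1), b (k + j) = (∑ j ∈ range n, b (k + (j+1))) + b k := by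
    rw [Finset.sum_range_succ']; simp
  have h2 : ∑ j ∈ range (n+1), b (k + j) = (∑ j ∈ range n, b (k + j)) + b (k + n) := by
    rw [Finset.sum_range_succ]
  have h3 : b (k + n) = - b k := hbn k
  have h4 : ∑ j ∈ range n, b ((k+1) + j) = ∑ j ∈ range n, b (k + (j+1)) := by
    apply Finset.sum_congr rfl; intro j _; congr 1; ring
  rw [W, W, h4]
  omega

include hbn in
lemma W_neg (k : ℕ) : W n b (n + k) = - W n b k := by
  rw [W, W, ← Finset.sum_neg_distrib]
  apply Finset.sum_congr rfl
  intro j _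
  have he : n + k + j = (k + j) + n := by ring
  rw [he, hbn]

end Seq

lemma coeff_shift (F : ℕ → ℤ) (n : ℕ) :
    ∑ i ∈ range n, ((n - i : ℕ) : ℤ) * F (i+1)
      = (∑ i ∈ range (n-1), ((n - 1 - i : ℕ) : ℤ) * F (i+1)) + ∑ i ∈ range n, F (i+1) := by
  cases n with
  | zero => simp
  | succ m =>
    rw [Finset.sum_range_succ]
    have h1 : ∀ i ∈ range m, ((m + 1 - i : ℕ) : ℤ) * F (i+1)
        = ((m - i : ℕ) : ℤ) * F (i+1) + F (i+1) := by
      intro i hi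
      rw [Finset.mem_range] at hi
      have he : ((m + 1 - i : ℕ) : ℤ) = ((m - i : ℕ) : ℤ) + 1 := by
        have h2 : m + 1 - i = (m - i) + 1 := by omega
        rw [h2]; push_cast; ring
      rw [he]; ring
    rw [Finset.sum_congr rfl h1, Finset.sum_add_distrib]
    have h3 : ((m + 1 - m : ℕ) : ℤ) = 1 := by norm_num
    rw [h3]
    have h4 : range (m + 1 - 1) = range m := by norm_num
    rw [h4, Finset.sum_range_succ]
    simp only [Nat.add_sub_cancel]
    ring

lemma pair_count (F : ℕ → ℤ) :
    ∀ n : ℕ, (∑ j ∈ range n, ∑ j' ∈ range n, F ((j' - j) + (j - j')))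
      = n * F 0 + 2 * ∑ i ∈ range (n-1), ((n - 1 - i : ℕ) : ℤ) * F (i+1) := by
  intro n
  induction n with
  | zero => simp
  | succ n ih =>
    have expand : ∑ j ∈ range (n+1), ∑ j' ∈ range (n+1), F ((j' - j) + (j - j'))
        = (∑ j ∈ range n, ∑ j' ∈ range n, F ((j' - j) + (j - j')))
          + (∑ j ∈ range n, F (n - j)) + (∑ j' ∈ range n, F (n - j')) + F 0 := by
      rw [Finset.sum_range_succ]
      have hrow : ∑ j' ∈ range (n+1), F ((j' - n) + (n - j'))
          = (∑ j' ∈ range n, F (n - j')) + F 0 := by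
        rw [Finset.sum_range_succ]
        congr 1
        · apply Finset.sum_congr rfl
          intro j' hj'
          rw [Finset.mem_range] at hj'
          congr 1
          omega
        · congr 1; omega
      have hcols : ∀ j ∈ range n, ∑ j' ∈ range (n+1), F ((j' - j) + (j - j'))
          = (∑ j' ∈ range n, F ((j' - j) + (j - j'))) + F (n - j) := by
        intro j hj
        rw [Finset.mem_range] at hj
        rw [Finset.sum_range_succ]
        congr 2
        omega
      rw [Finset.sum_congr rfl hcols, Finset.sum_add_distrib, hrow]
      ring
    have hrefl : ∑ j ∈ range n, F (n - j) = ∑ i ∈ range n, F (i + 1) := by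
      have h := Finset.sum_range_reflect (fun i => F (i + 1)) n
      rw [← h]
      apply Finset.sum_congr rfl
      intro j hj
      rw [Finset.mem_range] at hj
      congr 1
      omega
    rw [expand, ih, hrefl]
    have hns : (n + 1) - 1 = n := by omega
    rw [hns, coeff_shift F n]
    push_cast
    ring

lemma sum_W_sq (n : ℕ) (b : ℕ → ℤ) (hbn : ∀ m, b (m + n) = - b m) :
    ∑ k ∈ range n, (W n b k)^2
      = n * Abar n b 0 + 2 * ∑ i ∈ range (n-1), ((n - 1 - i : ℕ) : ℤ) * Abar n b (i+1) := by
  have h1 : ∀ k, (W n b k)^2 = ∑ j ∈ range n, ∑ j' ∈ range n, b (k + j) * b (k + j') := by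
    intro k
    rw [W, sq, Finset.sum_mul_sum]
  have h2 : ∑ k ∈ range n, (W n b k)^2
      = ∑ j ∈ range n, ∑ j' ∈ range n, ∑ k ∈ range n, b (k + j) * b (k + j') := by
    rw [Finset.sum_congr rfl (fun k _ => h1 k)]
    rw [Finset.sum_comm]
    apply Finset.sum_congr rfl
    intro j _
    rw [Finset.sum_comm]
  rw [h2]
  have h3 : ∑ j ∈ range n, ∑ j' ∈ range n, ∑ k ∈ range n, b (k + j) * b (k + j')
      = ∑ j ∈ range n, ∑ j' ∈ range n, Abar n b ((j' - j) + (j - j')) := by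
    apply Finset.sum_congr rfl; intro j _
    apply Finset.sum_congr rfl; intro j' _
    exact inner_eval n b hbn j j'
  rw [h3, pair_count (Abar n b) n]

lemma walk_ivt (W : ℕ → ℤ) (hstep : ∀ k, W (k+1) = W k + 2 ∨ W (k+1) = W k - 2) :
    ∀ N a v, Even (W a - v) → W (a + N) ≤ v → v ≤ W a →
      ∃ k, a ≤ k ∧ k ≤ a + N ∧ W k = v := by
  intro N
  induction N with
  | zero =>
    intro a v _ h1 h2
    rw [Nat.add_zero] at h1
    exact ⟨a, le_refl a, by omega, by omega⟩
  | succ N ih =>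
    intro a v hev h1 h2
    rcases eq_or_lt_of_le h2 with he | hlt
    · exact ⟨a, le_refl a, by omega, he.symm⟩
    · have hge2 : v ≤ W a - 2 := by
        obtain ⟨m, hm⟩ := hev
        omega
      have hstep' := hstep a
      have h1' : W ((a+1) + N) ≤ v := by
        have he : (a+1) + N = a + (N+1) := by ring
        rw [he]; exact h1
      have h2' : v ≤ W (a+1) := by omega
      have hev' : Even (W (a+1) - v) := by
        obtain ⟨m, hm⟩ := hev
        rcases hstep' with h | h
        · exact ⟨m + 1, by omega⟩
        · exact ⟨m - 1, by omega⟩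
      obtain ⟨k, hk1, hk2, hk3⟩ := ih (a+1) v hev' h1' h2'
      exact ⟨k, by omega, by omega, hk3⟩

lemma sq_sum_formula (c : ℤ) (m : ℕ) :
    3 * ∑ e ∈ range m, (c - 2*e)^2
      = 3 * m * c^2 - 6 * c * (m * (m-1)) + 2 * (m * (m-1) * (2*m-1)) := by
  induction m with
  | zero => simp
  | succ m ih =>
    rw [Finset.sum_range_succ]
    push_cast
    push_cast at ih
    have key : 3 * (c - 2*(m:ℤ))^2
        = (3*((m:ℤ)+1)*c^2 - 6*c*(((m:ℤ)+1)*(((m:ℤ)+1)-1))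
            + 2*(((m:ℤ)+1)*(((m:ℤ)+1)-1)*(2*((m:ℤ)+1)-1)))
          - (3*(m:ℤ)*c^2 - 6*c*((m:ℤ)*((m:ℤ)-1)) + 2*((m:ℤ)*((m:ℤ)-1)*(2*(m:ℤ)-1))) := by
      ring
    linarith

lemma sum_range_two_mul (F : ℕ → ℤ) (m : ℕ) :
    ∑ i ∈ range (2*m), F i = ∑ e ∈ range m, (F (2*e) + F (2*e+1)) := by
  induction m with
  | zero => simp
  | succ m ih =>
    have h : 2 * (m+1) = (2*m + 1) + 1 := by ring
    rw [h, Finset.sum_range_succ, Finset.sum_range_succ, Finset.sum_range_succ, ih]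
    ring

lemma E2_bound (t : ℕ) (ht : 1 ≤ t) (A : ℕ → ℤ)
    (hanti : ∀ d, d ≤ 4*t+2 → A ((4*t+2) - d) = - A d)
    (hodd : ∀ i, i < 4*t+1 → Even i → A (i+1) = 0)
    (hbound : ∀ i, i < 4*t+1 → |A (i+1)| ≤ 2) :
    ∑ i ∈ range (4*t+1), (((4*t+1) - i : ℕ) : ℤ) * A (i+1) ≤ 4 * t^2 := by
  set n : ℕ := 4*t+2 with hn
  set E2 : ℤ := ∑ i ∈ range (4*t+1), (((4*t+1) - i : ℕ) : ℤ) * A (i+1) with hE2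
  have hrefl : E2 = ∑ i ∈ range (4*t+1), (((4*t+1) - ((4*t) - i) : ℕ) : ℤ) * A (((4*t) - i)+1) := by
    rw [hE2]
    have h := Finset.sum_range_reflect
      (fun i => (((4*t+1) - i : ℕ) : ℤ) * A (i+1)) (4*t+1)
    rw [← h]
    apply Finset.sum_congr rfl
    intro i hi
    rw [Finset.mem_range] at hi
    have he : 4*t+1-1-i = 4*t - i := by omega
    rw [he]
  have hrefl2 : E2 = ∑ i ∈ range (4*t+1), (-((i:ℤ)+1)) * A (i+1) := by
    rw [hrefl]
    apply Finset.sum_congr rfl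
    intro i hi
    rw [Finset.mem_range] at hi
    have h1 : ((4*t+1) - ((4*t) - i) : ℕ) = i + 1 := by omega
    have h2 : ((4*t) - i) + 1 = n - (i+1) := by omega
    rw [h1, h2, hanti (i+1) (by omega)]
    push_cast
    ring
  have hdouble : 2 * E2 = ∑ i ∈ range (4*t+1),
      ((((4*t+1) - i : ℕ) : ℤ) - ((i:ℤ)+1)) * A (i+1) := by
    have h : 2 * E2 = E2 + E2 := by ring
    rw [h]
    nth_rewrite 1 [hE2]
    nth_rewrite 1 [hrefl2]
    rw [← Finset.sum_add_distrib]
    apply Finset.sum_congr rfl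
    intro i _
    ring
  set bnd : ℕ → ℤ := fun i => if Even i then 0 else 2 * |(((4*t+1) - i : ℕ) : ℤ) - ((i:ℤ)+1)|
    with hbnd
  have hterm : ∀ i ∈ range (4*t+1),
      ((((4*t+1) - i : ℕ) : ℤ) - ((i:ℤ)+1)) * A (i+1) ≤ bnd i := by
    intro i hi
    rw [Finset.mem_range] at hi
    rw [hbnd]
    by_cases he : Even i
    · simp only [he, if_true]
      rw [hodd i hi he]
      simp
    · simp only [he, if_false]
      calc ((((4*t+1) - i : ℕ) : ℤ) - ((i:ℤ)+1)) * A (i+1)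
          ≤ |((((4*t+1) - i : ℕ) : ℤ) - ((i:ℤ)+1)) * A (i+1)| := le_abs_self _
        _ = |(((4*t+1) - i : ℕ) : ℤ) - ((i:ℤ)+1)| * |A (i+1)| := abs_mul _ _
        _ ≤ |(((4*t+1) - i : ℕ) : ℤ) - ((i:ℤ)+1)| * 2 :=
            mul_le_mul_of_nonneg_left (hbound i hi) (abs_nonneg _)
        _ = 2 * |(((4*t+1) - i : ℕ) : ℤ) - ((i:ℤ)+1)| := by ring
  have hsumbnd : ∑ i ∈ range (4*t+1), bnd i = 8 * t^2 := by
    have hsplit : ∑ i ∈ range (4*t+1), bnd i = (∑ i ∈ range (4*t), bnd i) + bnd (4*t) := by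
      rw [Finset.sum_range_succ]
    have hlast : bnd (4*t) = 0 := by
      rw [hbnd]
      exact if_pos (⟨2*t, by ring⟩ : Even (4*t))
    have h2m : (4:ℕ)*t = 2*(2*t) := by ring
    have hpair : ∑ i ∈ range (4*t), bnd i = ∑ u ∈ range (2*t), (bnd (2*u) + bnd (2*u+1)) := by
      rw [h2m, sum_range_two_mul]
    have heval : ∀ u ∈ range (2*t), bnd (2*u) + bnd (2*u+1) = 2 * |(4*(t:ℤ) - 2 - 4*u)| := by
      intro u hu
      rw [Finset.mem_range] at hu
      have h1 : bnd (2*u) = 0 := by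
        rw [hbnd]
        exact if_pos (⟨u, by ring⟩ : Even (2*u))
      have h2 : ¬ Even (2*u+1) := by
        simp [Nat.even_add_one, Nat.even_mul]
      have h3 : bnd (2*u+1) = 2 * |(((4*t+1) - (2*u+1) : ℕ) : ℤ) - (((2*u+1:ℕ):ℤ)+1)| := by
        rw [hbnd]
        exact if_neg h2
      have h4 : (((4*t+1) - (2*u+1) : ℕ) : ℤ) = 4*(t:ℤ) - 2*u := by omega
      rw [h1, h3, h4, zero_add]
      congr 1
      congr 1
      push_cast
      ring
    have habs_sum : ∑ u ∈ range (2*t), |(4*(t:ℤ) - 2 - 4*u)| = 4*t^2 := by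
      have hsplit2 : range (2*t) = Finset.Ico 0 (2*t) := by rw [Finset.range_eq_Ico]
      rw [hsplit2, ← Finset.sum_Ico_consecutive _ (Nat.zero_le t) (by omega : t ≤ 2*t)]
      have hA : ∑ u ∈ Finset.Ico 0 t, |(4*(t:ℤ) - 2 - 4*u)| = ∑ u ∈ range t, (4*(t:ℤ) - 2 - 4*u) := by
        rw [← Finset.range_eq_Ico]
        apply Finset.sum_congr rfl
        intro u hu
        rw [Finset.mem_range] at hu
        rw [abs_of_nonneg (by omega : (0:ℤ) ≤ 4*(t:ℤ) - 2 - 4*u)]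
      have hB : ∑ u ∈ Finset.Ico t (2*t), |(4*(t:ℤ) - 2 - 4*u)| = ∑ v ∈ range t, (4*(v:ℤ) + 2) := by
        rw [Finset.sum_Ico_eq_sum_range]
        have ht2 : 2*t - t = t := by omega
        rw [ht2]
        apply Finset.sum_congr rfl
        intro v hv
        rw [Finset.mem_range] at hv
        have he : (4*(t:ℤ) - 2 - 4*(↑(t + v))) = -(4*(v:ℤ) + 2) := by push_cast; ring
        rw [he, abs_neg, abs_of_nonneg (by positivity)]
      rw [hA, hB, ← Finset.sum_add_distrib]
      have hc : ∀ u ∈ range t, ((4*(t:ℤ) - 2 - 4*u) + (4*(u:ℤ) + 2)) = 4*(t:ℤ) := by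
        intro u _; ring
      rw [Finset.sum_congr rfl hc, Finset.sum_const, Finset.card_range, nsmul_eq_mul]
      push_cast
      ring
    rw [hsplit, hlast, hpair, Finset.sum_congr rfl heval, ← Finset.mul_sum, habs_sum]
    ring
  have hfinal : 2 * E2 ≤ 8 * t^2 := by
    rw [hdouble, ← hsumbnd]
    exact Finset.sum_le_sum hterm
  linarith

end Stmt14


open Finset



set_option maxHeartbeats 4000000 in
/-- if `ψ = γ ∏_{j=1}^w ∂_{i_j}` is a quasi-orthogonal cocycle
over `ℤ/(4t+2)ℤ`, where `γ` is the back negacyclic cocycle and the `∂_{i_j}`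
are distinct elementary coboundaries with `2 ≤ i_j ≤ 4t+2` (elementary
coboundary `∂_k = ∂δ_k`, with `δ_k` equal to `-1` exactly at the element
`k - 1`), then `t ≤ w ≤ 3t+1`. -/
theorem stmt_14 (t : ℕ) (ht : 1 ≤ t) [NeZero (4 * t + 2)]
    (I : Finset ℕ) (hI : ∀ i ∈ I, 2 ≤ i ∧ i ≤ 4 * t + 2)
    (Φ : ZMod (4 * t + 2) → ℤ)
    (hΦ : ∀ x, Φ x = ∏ i ∈ I,
      (if x = ((i : ZMod (4 * t + 2)) - 1) then (-1 : ℤ) else 1))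
    (ψ : ZMod (4 * t + 2) → ZMod (4 * t + 2) → ℤ)
    (hψ : ∀ g h, ψ g h =
      (-1 : ℤ) ^ ((g.val + h.val) / (4 * t + 2)) * (Φ g * Φ h * Φ (g + h)))
    (hqo : (∑ g ∈ Finset.univ.erase (0 : ZMod (4 * t + 2)), |∑ h, ψ g h|)
      = 4 * t) :
    t ≤ I.card ∧ I.card ≤ 3 * t + 1 := by
  classical
  have hnpos : 0 < 4*t+2 := by omega
  -- Φ is ±1-valued
  have hpm : ∀ x : ZMod (4*t+2), Φ x = 1 ∨ Φ x = -1 := by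
    intro x
    rw [hΦ x]
    refine Finset.prod_induction _ (fun z => z = 1 ∨ z = -1) ?_ (Or.inl rfl) ?_
    · rintro a c (ha | ha) (hc | hc) <;> rw [ha, hc] <;> simp
    · intro i _; split_ifs <;> simp
  have habsΦ : ∀ x : ZMod (4*t+2), |Φ x| = 1 := by
    intro x; rcases hpm x with h | h <;> rw [h] <;> simp
  -- casts of elements of I are never 1
  have hvali : ∀ i ∈ I, ¬ ((i : ZMod (4*t+2)) = 1) := by
    intro i hi h
    obtain ⟨h2, hle⟩ := hI i hi
    have hv := congrArg ZMod.val h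
    rw [ZMod.val_natCast] at hv
    have hone : (1 : ZMod (4*t+2)).val = 1 := by
      have h1 : ((1:ℕ) : ZMod (4*t+2)).val = 1 % (4*t+2) := ZMod.val_natCast (4*t+2) 1
      rw [Nat.cast_one] at h1
      rw [h1, Nat.mod_eq_of_lt (by omega)]
    rw [hone] at hv
    have e1 : i % (4*t+2) = i ∨ (i = 4*t+2 ∧ i % (4*t+2) = 0) := by
      rcases eq_or_lt_of_le hle with he | hlt
      · right; exact ⟨he, by rw [he, Nat.mod_self]⟩
      · left; exact Nat.mod_eq_of_lt hlt
    omega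
  have hΦ0 : Φ 0 = 1 := by
    rw [hΦ 0]
    apply Finset.prod_eq_one
    intro i hi
    rw [if_neg]
    intro h0
    exact hvali i hi (sub_eq_zero.mp h0.symm)
  -- injectivity
  have hinj : ∀ i ∈ I, ∀ i' ∈ I, (i : ZMod (4*t+2)) = (i' : ZMod (4*t+2)) → i = i' := by
    intro i hi i' hi' h
    obtain ⟨h2, hle⟩ := hI i hi
    obtain ⟨h2', hle'⟩ := hI i' hi'
    have hv := congrArg ZMod.val h
    rw [ZMod.val_natCast, ZMod.val_natCast] at hv
    have e1 : i % (4*t+2) = i ∨ (i = 4*t+2 ∧ i % (4*t+2) = 0) := by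
      rcases eq_or_lt_of_le hle with he | hlt
      · right; exact ⟨he, by rw [he, Nat.mod_self]⟩
      · left; exact Nat.mod_eq_of_lt hlt
    have e2 : i' % (4*t+2) = i' ∨ (i' = 4*t+2 ∧ i' % (4*t+2) = 0) := by
      rcases eq_or_lt_of_le hle' with he | hlt
      · right; exact ⟨he, by rw [he, Nat.mod_self]⟩
      · left; exact Nat.mod_eq_of_lt hlt
    omega
  -- Φ as an indicator of the image set
  set Simg : Finset (ZMod (4*t+2)) := I.image (fun i : ℕ => ((i : ℕ) : ZMod (4*t+2)) - 1) with hSimg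
  have hScard : Simg.card = I.card := by
    rw [hSimg]
    apply Finset.card_image_of_injOn
    intro i hi i' hi' h
    exact hinj i (Finset.mem_coe.mp hi) i' (Finset.mem_coe.mp hi') (by
      have := sub_left_inj.mp h
      exact this)
  have hind : ∀ x, Φ x = if x ∈ Simg then -1 else 1 := by
    intro x
    by_cases hx : x ∈ Simg
    · rw [if_pos hx, hΦ x]
      rw [hSimg] at hx
      obtain ⟨i0, hi0, hx0⟩ := Finset.mem_image.mp hx
      have h0 : ∀ i ∈ I, i ≠ i0 →
          (if x = ((i : ℕ) : ZMod (4*t+2)) - 1 then (-1:ℤ) else 1) = 1 := by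
        intro i hi hne
        rw [if_neg]
        intro hxi
        apply hne
        apply hinj i hi i0 hi0
        have h5 : ((i : ℕ) : ZMod (4*t+2)) - 1 = ((i0 : ℕ) : ZMod (4*t+2)) - 1 := by
          rw [← hxi, hx0]
        exact sub_left_inj.mp h5
      have h1 : i0 ∉ I →
          (if x = ((i0 : ℕ) : ZMod (4*t+2)) - 1 then (-1:ℤ) else 1) = 1 := by
        intro hni0; exact absurd hi0 hni0
      rw [Finset.prod_eq_single i0 h0 h1, if_pos hx0.symm]
    · rw [if_neg hx, hΦ x]
      apply Finset.prod_eq_one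
      intro i hi
      rw [if_neg]
      intro hxi
      apply hx
      rw [hSimg]
      exact Finset.mem_image.mpr ⟨i, hi, hxi.symm⟩
  -- total sum of Φ
  have hsumΦ : ∑ x : ZMod (4*t+2), Φ x = ((4*t+2 : ℕ) : ℤ) - 2 * I.card := by
    have h1 : ∀ x : ZMod (4*t+2), Φ x = 1 - 2 * (if x ∈ Simg then (1:ℤ) else 0) := by
      intro x; rw [hind x]; split_ifs <;> ring
    rw [Finset.sum_congr rfl (fun x _ => h1 x)]
    rw [Finset.sum_sub_distrib, Finset.sum_const, ← Finset.mul_sum, Finset.sum_boole]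
    rw [Finset.filter_univ_mem, Finset.card_univ, ZMod.card, hScard]
    push_cast
    ring
  -- conversion ZMod-sum ↔ range-sum
  have hconv : ∀ F : ZMod (4*t+2) → ℤ,
      ∑ x : ZMod (4*t+2), F x = ∑ j ∈ range (4*t+2), F (j : ZMod (4*t+2)) := by
    intro F
    refine Finset.sum_bij' (fun (x : ZMod (4*t+2)) _ => x.val)
      (fun (j : ℕ) _ => (j : ZMod (4*t+2))) ?_ ?_ ?_ ?_ ?_
    · intro a _; exact Finset.mem_range.mpr (ZMod.val_lt a)
    · intro a _; exact Finset.mem_univ _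
    · intro a _; exact ZMod.natCast_rightInverse a
    · intro a ha; exact ZMod.val_cast_of_lt (Finset.mem_range.mp ha)
    · intro a _; exact congrArg F (ZMod.natCast_rightInverse a).symm
  -- ============ the sequence b ============
  set b : ℕ → ℤ := fun m => (-1)^(m / (4*t+2)) * Φ ((m : ℕ) : ZMod (4*t+2)) with hbdef
  have hbm : ∀ m, b m = (-1)^(m / (4*t+2)) * Φ ((m : ℕ) : ZMod (4*t+2)) := by
    intro m; rw [hbdef]
  have hbneg : ∀ m, b (m + (4*t+2)) = - b m := by
    intro m
    rw [hbm, hbm]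
    have h1 : (m + (4*t+2)) / (4*t+2) = m / (4*t+2) + 1 := Nat.add_div_right m hnpos
    have h2 : (((m + (4*t+2)) : ℕ) : ZMod (4*t+2)) = ((m : ℕ) : ZMod (4*t+2)) := by
      rw [Nat.cast_add, ZMod.natCast_self, add_zero]
    rw [h1, h2, pow_succ]
    ring
  have hb1 : ∀ m, b m = 1 ∨ b m = -1 := by
    intro m
    rw [hbm]
    have hp : (-1:ℤ)^(m / (4*t+2)) = 1 ∨ (-1:ℤ)^(m / (4*t+2)) = -1 := by
      rcases Nat.even_or_odd (m / (4*t+2)) with h | h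
      · left; exact Even.neg_one_pow h
      · right; exact Odd.neg_one_pow h
    rcases hp with h | h <;> rcases hpm ((m : ℕ) : ZMod (4*t+2)) with h' | h' <;>
      rw [h, h'] <;> norm_num
  have hb0 : ∀ j, j < 4*t+2 → b j = Φ ((j : ℕ) : ZMod (4*t+2)) := by
    intro j hj
    rw [hbm, Nat.div_eq_of_lt hj, pow_zero, one_mul]
  have hb00 : b 0 = 1 := by
    rw [hb0 0 (by omega), Nat.cast_zero, hΦ0]
  -- ============ row sums ============
  have hrow : ∀ g : ZMod (4*t+2), ∑ h, ψ g h = Φ g * Stmt14.Abar (4*t+2) b g.val := by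
    intro g
    have h1 : ∀ h : ZMod (4*t+2), ψ g h = Φ g * (Φ h * b (h.val + g.val)) := by
      intro h
      rw [hψ g h, hbm (h.val + g.val)]
      have hcast : (((h.val + g.val) : ℕ) : ZMod (4*t+2)) = g + h := by
        push_cast
        rw [ZMod.natCast_rightInverse h, ZMod.natCast_rightInverse g]
        ring
      rw [hcast]
      have hcomm : h.val + g.val = g.val + h.val := by ring
      rw [hcomm]
      ring
    rw [Finset.sum_congr rfl (fun h _ => h1 h), ← Finset.mul_sum]
    congr 1
    rw [hconv (fun h => Φ h * b (h.val + g.val))]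
    rw [Stmt14.Abar]
    apply Finset.sum_congr rfl
    intro j hj
    rw [Finset.mem_range] at hj
    rw [ZMod.val_cast_of_lt hj, ← hb0 j hj]
  -- ============ hqo ⇒ sum over Ico 1 n of |Abar| ============
  have hqo2 : ∑ k ∈ Finset.Ico 1 (4*t+2), |Stmt14.Abar (4*t+2) b k| = 4*t := by
    have e1 : ∀ g : ZMod (4*t+2), |∑ h, ψ g h| = |Stmt14.Abar (4*t+2) b g.val| := by
      intro g; rw [hrow g, abs_mul, habsΦ g, one_mul]
    have e2 : (∑ g ∈ Finset.univ.erase (0 : ZMod (4*t+2)), |∑ h, ψ g h|)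
        + |∑ h, ψ (0 : ZMod (4*t+2)) h|
        = ∑ g : ZMod (4*t+2), |∑ h, ψ g h| :=
      Finset.sum_erase_add _ _ (Finset.mem_univ 0)
    have e3 : ∑ g : ZMod (4*t+2), |∑ h, ψ g h|
        = ∑ j ∈ range (4*t+2), |Stmt14.Abar (4*t+2) b j| := by
      rw [Finset.sum_congr rfl (fun g _ => e1 g)]
      rw [hconv (fun g => |Stmt14.Abar (4*t+2) b g.val|)]
      apply Finset.sum_congr rfl
      intro j hj
      rw [Finset.mem_range] at hj
      rw [ZMod.val_cast_of_lt hj]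
    have e4 : |∑ h, ψ (0 : ZMod (4*t+2)) h| = |Stmt14.Abar (4*t+2) b 0| := by
      rw [e1 0, ZMod.val_zero]
    have e5 : ∑ j ∈ range (4*t+2), |Stmt14.Abar (4*t+2) b j|
        = |Stmt14.Abar (4*t+2) b 0| + ∑ k ∈ Finset.Ico 1 (4*t+2), |Stmt14.Abar (4*t+2) b k| := by
      rw [Finset.range_eq_Ico]
      exact Finset.sum_eq_sum_Ico_succ_bot hnpos _
    rw [hqo, e4] at e2
    rw [e5] at e3
    omega
  -- ============ structure of Abar from quasi-orthogonality ============
  have hqo3 : ∑ i ∈ range (4*t+1), |Stmt14.Abar (4*t+2) b (i+1)| = 4*t := by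
    have h1 := Finset.sum_Ico_eq_sum_range
      (f := fun k => |Stmt14.Abar (4*t+2) b k|) (m := 1) (n := 4*t+2)
    have h2 : (4*t+2) - 1 = 4*t+1 := by omega
    rw [h2] at h1
    rw [h1] at hqo2
    rw [← hqo2]
    apply Finset.sum_congr rfl
    intro i _
    rw [Nat.add_comm 1 i]
  have heven_ge : ∀ e, e < 2*t → 2 ≤ |Stmt14.Abar (4*t+2) b (2*e+2)| := by
    intro e _
    exact Stmt14.Abar_even_ge (4*t+2) b hbneg hb1 t (2*e+2) rfl ⟨e+1, by ring⟩
  have hsplit : ∑ i ∈ range (4*t+1), |Stmt14.Abar (4*t+2) b (i+1)|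
      = (∑ e ∈ range (2*t), (|Stmt14.Abar (4*t+2) b (2*e+1)| + |Stmt14.Abar (4*t+2) b (2*e+2)|))
        + |Stmt14.Abar (4*t+2) b (4*t+1)| := by
    rw [Finset.sum_range_succ]
    congr 1
    have h42 : range (4*t) = range (2*(2*t)) := by congr 1; ring
    rw [h42, Stmt14.sum_range_two_mul (fun i => |Stmt14.Abar (4*t+2) b (i+1)|)]
  have hnn : ∀ e ∈ range (2*t),
      (0:ℤ) ≤ |Stmt14.Abar (4*t+2) b (2*e+1)| + (|Stmt14.Abar (4*t+2) b (2*e+2)| - 2) := by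
    intro e he
    have h1 := heven_ge e (Finset.mem_range.mp he)
    have h2 := abs_nonneg (Stmt14.Abar (4*t+2) b (2*e+1))
    linarith
  have hsum0 : ∑ e ∈ range (2*t),
      (|Stmt14.Abar (4*t+2) b (2*e+1)| + (|Stmt14.Abar (4*t+2) b (2*e+2)| - 2)) = 0
      ∧ Stmt14.Abar (4*t+2) b (4*t+1) = 0 := by
    have e1 : ∀ e ∈ range (2*t),
        (|Stmt14.Abar (4*t+2) b (2*e+1)| + |Stmt14.Abar (4*t+2) b (2*e+2)|)
        = (|Stmt14.Abar (4*t+2) b (2*e+1)| + (|Stmt14.Abar (4*t+2) b (2*e+2)| - 2)) + 2 := by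
      intro e _; ring
    have e2 : ∑ e ∈ range (2*t),
        (|Stmt14.Abar (4*t+2) b (2*e+1)| + |Stmt14.Abar (4*t+2) b (2*e+2)|)
        = (∑ e ∈ range (2*t),
            (|Stmt14.Abar (4*t+2) b (2*e+1)| + (|Stmt14.Abar (4*t+2) b (2*e+2)| - 2)))
          + 2 * (2*t) := by
      rw [Finset.sum_congr rfl e1, Finset.sum_add_distrib, Finset.sum_const, Finset.card_range,
        nsmul_eq_mul]
      push_cast
      ring
    have e3 := hqo3
    rw [hsplit, e2] at e3
    have e4 : (0:ℤ) ≤ ∑ e ∈ range (2*t),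
        (|Stmt14.Abar (4*t+2) b (2*e+1)| + (|Stmt14.Abar (4*t+2) b (2*e+2)| - 2)) :=
      Finset.sum_nonneg hnn
    have e5 : (0:ℤ) ≤ |Stmt14.Abar (4*t+2) b (4*t+1)| := abs_nonneg _
    have e6 : |Stmt14.Abar (4*t+2) b (4*t+1)| = 0 := by push_cast at e3; linarith
    constructor
    · push_cast at e3; linarith
    · exact abs_eq_zero.mp e6
  have hterm0 : ∀ e, e < 2*t →
      |Stmt14.Abar (4*t+2) b (2*e+1)| + (|Stmt14.Abar (4*t+2) b (2*e+2)| - 2) = 0 := by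
    intro e he
    exact (Finset.sum_eq_zero_iff_of_nonneg hnn).mp hsum0.1 e (Finset.mem_range.mpr he)
  have hodd0 : ∀ e, e < 2*t → Stmt14.Abar (4*t+2) b (2*e+1) = 0 := by
    intro e he
    have h1 := hterm0 e he
    have h2 := heven_ge e he
    have h3 := abs_nonneg (Stmt14.Abar (4*t+2) b (2*e+1))
    exact abs_eq_zero.mp (by linarith)
  have heq2 : ∀ e, e < 2*t → |Stmt14.Abar (4*t+2) b (2*e+2)| = 2 := by
    intro e he
    have h1 := hterm0 e he
    have h3 := abs_nonneg (Stmt14.Abar (4*t+2) b (2*e+1))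
    have h2 := heven_ge e he
    linarith
  have hodd' : ∀ i, i < 4*t+1 → Even i → Stmt14.Abar (4*t+2) b (i+1) = 0 := by
    intro i hi hev
    obtain ⟨e, hee⟩ := hev
    by_cases h4 : i = 4*t
    · rw [show i+1 = 4*t+1 by omega]
      exact hsum0.2
    · have he : e < 2*t := by omega
      rw [show i+1 = 2*e+1 by omega]
      exact hodd0 e he
  have hbound' : ∀ i, i < 4*t+1 → |Stmt14.Abar (4*t+2) b (i+1)| ≤ 2 := by
    intro i hi
    rcases Nat.even_or_odd i with he | ho
    · rw [hodd' i hi he]; norm_num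
    · obtain ⟨e, heo⟩ := ho
      have he2 : e < 2*t := by omega
      rw [show i+1 = 2*e+2 by omega]
      rw [heq2 e he2]
  have hanti : ∀ d, d ≤ 4*t+2 →
      Stmt14.Abar (4*t+2) b ((4*t+2) - d) = - Stmt14.Abar (4*t+2) b d :=
    fun d hd => Stmt14.Abar_antisym (4*t+2) b hbneg d hd
  -- ============ bound on sum of squared window sums ============
  have hW2 : ∑ k ∈ range (4*t+2), (Stmt14.W (4*t+2) b k)^2
      ≤ ((4*t+2:ℕ):ℤ)^2 + 8*t^2 := by
    rw [Stmt14.sum_W_sq (4*t+2) b hbneg]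
    have hE2 := Stmt14.E2_bound t ht (Stmt14.Abar (4*t+2) b) hanti hodd' hbound'
    have hA0 : Stmt14.Abar (4*t+2) b 0 = ((4*t+2:ℕ):ℤ) := Stmt14.Abar_zero (4*t+2) b hb1
    rw [hA0]
    have hm : (4*t+2) - 1 = 4*t+1 := by omega
    rw [hm]
    have hsq : ((4*t+2:ℕ):ℤ) * ((4*t+2:ℕ):ℤ) = ((4*t+2:ℕ):ℤ)^2 := (sq _).symm
    linarith
  -- ============ window sum facts ============
  have hWstep : ∀ k, Stmt14.W (4*t+2) b (k+1) = Stmt14.W (4*t+2) b k + 2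
      ∨ Stmt14.W (4*t+2) b (k+1) = Stmt14.W (4*t+2) b k - 2 := by
    intro k
    have h := Stmt14.W_succ (4*t+2) b hbneg k
    rcases hb1 k with h1 | h1
    · right; rw [h, h1]; ring
    · left; rw [h, h1]; ring
  have hW0 : Stmt14.W (4*t+2) b 0 = ((4*t+2:ℕ):ℤ) - 2*I.card := by
    rw [Stmt14.W]
    have h1 : ∑ j ∈ range (4*t+2), b (0 + j) = ∑ j ∈ range (4*t+2), Φ ((j:ℕ) : ZMod (4*t+2)) := by
      apply Finset.sum_congr rfl
      intro j hj
      rw [Nat.zero_add, hb0 j (Finset.mem_range.mp hj)]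
    rw [h1, ← hconv Φ, hsumΦ]
  have hWn : ∀ k, Stmt14.W (4*t+2) b ((4*t+2) + k) = - Stmt14.W (4*t+2) b k :=
    Stmt14.W_neg (4*t+2) b hbneg
  have hform := Stmt14.sq_sum_formula (2*(t:ℤ)+4) (2*t+4)
  have hcastf : ((2*t+4 : ℕ):ℤ) = 2*(t:ℤ)+4 := by push_cast; ring
  rw [hcastf] at hform
  constructor
  -- ============ case A : t ≤ I.card ============
  · by_contra hcon
    push_neg at hcon
    have hs : (2*(t:ℤ)+4) ≤ Stmt14.W (4*t+2) b 0 := by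
      rw [hW0]; push_cast; omega
    have hWn0 : Stmt14.W (4*t+2) b (0 + (4*t+2)) = - Stmt14.W (4*t+2) b 0 := by
      rw [Nat.zero_add]
      have h := hWn 0
      rwa [Nat.add_zero] at h
    have hex : ∀ e : ℕ, ∃ k, e < 2*t+4 →
        (k < 4*t+2 ∧ Stmt14.W (4*t+2) b k = (2*(t:ℤ)+4) - 2*e) := by
      intro e
      by_cases he : e < 2*t+4
      swap
      · exact ⟨0, fun h => absurd h he⟩
      refine ?_
      have hv1 : (2*(t:ℤ)+4) - 2*e ≤ Stmt14.W (4*t+2) b 0 := by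
        have he' : (0:ℤ) ≤ (e:ℤ) := by positivity
        linarith
      have hv2 : Stmt14.W (4*t+2) b (0 + (4*t+2)) ≤ (2*(t:ℤ)+4) - 2*e := by
        rw [hWn0]
        have he' : (e:ℤ) ≤ 2*(t:ℤ)+3 := by omega
        linarith
      have hev : Even (Stmt14.W (4*t+2) b 0 - ((2*(t:ℤ)+4) - 2*e)) := by
        refine ⟨(t:ℤ) - 1 - I.card + e, ?_⟩
        rw [hW0]; push_cast; ring
      obtain ⟨k, _, hkn, hkv⟩ := Stmt14.walk_ivt _ hWstep (4*t+2) 0 _ hev hv2 hv1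
      refine ⟨k, fun _ => ⟨?_, hkv⟩⟩
      rcases eq_or_lt_of_le hkn with hke | hklt
      · exfalso
        rw [hke] at hkv
        rw [hWn0] at hkv
        have he' : (e:ℤ) ≤ 2*(t:ℤ)+3 := by omega
        linarith
      · omega
    obtain ⟨pick, hpick⟩ := Classical.axiomOfChoice hex
    have himg : (range (2*t+4)).image pick ⊆ range (4*t+2) := by
      intro k hk
      obtain ⟨e, he, hke⟩ := Finset.mem_image.mp hk
      rw [Finset.mem_range] at he ⊢
      rw [← hke]
      exact (hpick e he).1
    have hinj2 : ∀ e ∈ range (2*t+4), ∀ e' ∈ range (2*t+4), pick e = pick e' → e = e' := by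
      intro e he e' he' h
      rw [Finset.mem_range] at he he'
      have h1 := (hpick e he).2
      have h2 := (hpick e' he').2
      rw [h] at h1
      rw [h1] at h2
      omega
    have hgesum : ∑ e ∈ range (2*t+4), ((2*(t:ℤ)+4) - 2*e)^2
        ≤ ∑ k ∈ range (4*t+2), (Stmt14.W (4*t+2) b k)^2 := by
      have e1 : ∑ e ∈ range (2*t+4), ((2*(t:ℤ)+4) - 2*e)^2
          = ∑ e ∈ range (2*t+4), (Stmt14.W (4*t+2) b (pick e))^2 := by
        apply Finset.sum_congr rfl
        intro e he
        rw [(hpick e (Finset.mem_range.mp he)).2]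
      have e2 : ∑ e ∈ range (2*t+4), (Stmt14.W (4*t+2) b (pick e))^2
          = ∑ k ∈ (range (2*t+4)).image pick, (Stmt14.W (4*t+2) b k)^2 := by
        rw [Finset.sum_image hinj2]
      rw [e1, e2]
      exact Finset.sum_le_sum_of_subset_of_nonneg himg (fun k _ _ => sq_nonneg _)
    have h2 := hW2
    push_cast at h2
    nlinarith [hgesum, h2, hform,
      mul_nonneg (by positivity : (0:ℤ) ≤ (t:ℤ)) (sq_nonneg ((t:ℤ) - 2))]
  -- ============ case B : I.card ≤ 3t+1 ============
  · by_contra hcon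
    push_neg at hcon
    have hW1 : Stmt14.W (4*t+2) b 1 = Stmt14.W (4*t+2) b 0 - 2 := by
      have h := Stmt14.W_succ (4*t+2) b hbneg 0
      rw [hb00] at h
      linarith
    have hs : Stmt14.W (4*t+2) b 1 ≤ -(2*(t:ℤ)+4) := by
      rw [hW1, hW0]; push_cast; omega
    have hWn1 : Stmt14.W (4*t+2) b (1 + (4*t+2)) = - Stmt14.W (4*t+2) b 1 := by
      rw [Nat.add_comm 1 (4*t+2)]
      exact hWn 1
    set W' : ℕ → ℤ := fun k => - Stmt14.W (4*t+2) b k with hW'def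
    have hW'm : ∀ k, W' k = - Stmt14.W (4*t+2) b k := by intro k; rw [hW'def]
    have hstep' : ∀ k, W' (k+1) = W' k + 2 ∨ W' (k+1) = W' k - 2 := by
      intro k
      rcases hWstep k with h | h
      · right; rw [hW'm, hW'm, h]; ring
      · left; rw [hW'm, hW'm, h]; ring
    have hex : ∀ e : ℕ, ∃ k, e < 2*t+4 →
        (1 ≤ k ∧ k ≤ 4*t+2 ∧ Stmt14.W (4*t+2) b k = 2*(e:ℤ) - (2*(t:ℤ)+4)) := by
      intro e
      by_cases he : e < 2*t+4
      swap
      · exact ⟨0, fun h => absurd h he⟩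
      refine ?_
      have hv1 : -(2*(e:ℤ) - (2*(t:ℤ)+4)) ≤ W' 1 := by
        rw [hW'm]
        have he' : (0:ℤ) ≤ (e:ℤ) := by positivity
        linarith
      have hv2 : W' (1 + (4*t+2)) ≤ -(2*(e:ℤ) - (2*(t:ℤ)+4)) := by
        rw [hW'm, hWn1, neg_neg]
        have he' : (e:ℤ) ≤ 2*(t:ℤ)+3 := by omega
        linarith
      have hev : Even (W' 1 - (-(2*(e:ℤ) - (2*(t:ℤ)+4)))) := by
        refine ⟨(I.card:ℤ) + e - 3*t - 2, ?_⟩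
        rw [hW'm, hW1, hW0]; push_cast; ring
      obtain ⟨k, hk1, hkn, hkv⟩ := Stmt14.walk_ivt W' hstep' (4*t+2) 1 _ hev hv2 hv1
      have hkv2 : Stmt14.W (4*t+2) b k = 2*(e:ℤ) - (2*(t:ℤ)+4) := by
        rw [hW'm] at hkv
        linarith
      refine ⟨k, fun _ => ⟨hk1, ?_, hkv2⟩⟩
      rcases eq_or_lt_of_le hkn with hke | hklt
      · exfalso
        rw [hke] at hkv2
        rw [hWn1] at hkv2
        have he' : (e:ℤ) ≤ 2*(t:ℤ)+3 := by omega
        linarith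
      · omega
    obtain ⟨pick, hpick⟩ := Classical.axiomOfChoice hex
    have hsum43 : ∑ k ∈ (range (4*t+3)).erase 0, (Stmt14.W (4*t+2) b k)^2
        = ∑ k ∈ range (4*t+2), (Stmt14.W (4*t+2) b k)^2 := by
      have e0 : (∑ k ∈ (range (4*t+3)).erase 0, (Stmt14.W (4*t+2) b k)^2)
          + (Stmt14.W (4*t+2) b 0)^2
          = ∑ k ∈ range (4*t+3), (Stmt14.W (4*t+2) b k)^2 :=
        Finset.sum_erase_add _ _ (Finset.mem_range.mpr (by omega))
      have e1 : ∑ k ∈ range (4*t+3), (Stmt14.W (4*t+2) b k)^2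
          = (∑ k ∈ range (4*t+2), (Stmt14.W (4*t+2) b k)^2)
            + (Stmt14.W (4*t+2) b (4*t+2))^2 := Finset.sum_range_succ _ _
      have e2 : Stmt14.W (4*t+2) b (4*t+2) = - Stmt14.W (4*t+2) b 0 := by
        have h := hWn 0
        rwa [Nat.add_zero] at h
      have e3 : (Stmt14.W (4*t+2) b (4*t+2))^2 = (Stmt14.W (4*t+2) b 0)^2 := by
        rw [e2]; ring
      rw [e3] at e1
      linarith
    have himg : (range (2*t+4)).image pick ⊆ (range (4*t+3)).erase 0 := by
      intro k hk
      obtain ⟨e, he, hke⟩ := Finset.mem_image.mp hk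
      rw [Finset.mem_range] at he
      have h1 := (hpick e he).1
      have h2 := (hpick e he).2.1
      rw [Finset.mem_erase, Finset.mem_range]
      omega
    have hinj2 : ∀ e ∈ range (2*t+4), ∀ e' ∈ range (2*t+4), pick e = pick e' → e = e' := by
      intro e he e' he' h
      rw [Finset.mem_range] at he he'
      have h1 := (hpick e he).2.2
      have h2 := (hpick e' he').2.2
      rw [h] at h1
      rw [h1] at h2
      omega
    have hgesum : ∑ e ∈ range (2*t+4), ((2*(t:ℤ)+4) - 2*e)^2
        ≤ ∑ k ∈ range (4*t+2), (Stmt14.W (4*t+2) b k)^2 := by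
      have e1 : ∑ e ∈ range (2*t+4), ((2*(t:ℤ)+4) - 2*e)^2
          = ∑ e ∈ range (2*t+4), (Stmt14.W (4*t+2) b (pick e))^2 := by
        apply Finset.sum_congr rfl
        intro e he
        rw [(hpick e (Finset.mem_range.mp he)).2.2]
        ring
      have e2 : ∑ e ∈ range (2*t+4), (Stmt14.W (4*t+2) b (pick e))^2
          = ∑ k ∈ (range (2*t+4)).image pick, (Stmt14.W (4*t+2) b k)^2 := by
        rw [Finset.sum_image hinj2]
      rw [e1, e2, ← hsum43]
      exact Finset.sum_le_sum_of_subset_of_nonneg himg (fun k _ _ => sq_nonneg _)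
    have h2 := hW2
    push_cast at h2
    nlinarith [hgesum, h2, hform,
      mul_nonneg (by positivity : (0:ℤ) ≤ (t:ℤ)) (sq_nonneg ((t:ℤ) - 2))]
end

section
/- Let G = ⟨a,b | aᵐ = b² = 1, b⁻¹ab = a⁻¹⟩ be the dihedral group of order 2m with m odd, and let ψ be a normalized {±1}-valued 2-cocycle on G which is not a coboundary. Then, indexing rows and columns by 1, a, ..., a^{m-1}, b, ab, ..., a^{m-1}b, the matrix M_ψ = [ψ(g,h)] is normal: M_ψ M_ψᵀ = M_ψᵀ M_ψ. -/
/-!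
The cocycle `ψ` defines a central extension `1 → ±1 → E → D_m → 1`. Lift the generators `r 1`
and `sr 0` to `a₀, b ∈ E`. As `m` is odd, `a₀ ^ m` is a central involution, so `a := a₀ ^ m * a₀`
satisfies `a ^ m = 1`, and then `b a b⁻¹ = a⁻¹` holds exactly, not only up to a central sign.
Expanding products of the section `r i ↦ a ^ i`, `sr i ↦ b a ^ i` shows that `ψ` is
cohomologous to the cocycle that equals `t := b²` on pairs of reflections and `1` elsewhere.
Since `ψ` is not a coboundary, `t = -1`, i.e. `ψ = β · ∂φ`. Then `M_ψ = D N D` with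
`D = diag φ` and `N g h = β g h * φ (g h)`, and `N` commutes with `Nᵀ` for every `φ`: the entries
are sums over the two cosets of the rotations, which match after an affine change of index.
-/

open Matrix

section OddPow

variable {E : Type*} [Monoid E] {m : ℕ}

theorem pow_eq_self_of_mul_self_eq_one {c : E} (hc : c * c = 1) (hm : Odd m) : c ^ m = c := by
  obtain ⟨k, rfl⟩ := hm
  rw [pow_succ, pow_mul, sq, hc, one_pow, one_mul]

theorem Commute.mul_pow_eq_one {c x : E} (hcx : Commute c x) (hc : c * c = 1) (hm : Odd m)
    (hx : x ^ m = c) : (c * x) ^ m = 1 := by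
  rw [hcx.mul_pow, hx, pow_eq_self_of_mul_self_eq_one hc hm, hc]

theorem eq_one_of_conj_eq_mul_inv {E : Type*} [Group E] {a b c : E} (hm : Odd m)
    (ha : a ^ m = 1) (hca : Commute c a) (hc : c * c = 1) (h : b * a * b⁻¹ = c * a⁻¹) : c = 1 := by
  have := congrArg (· ^ m) h
  simp only [conj_pow, ha, mul_one, mul_inv_cancel, hca.inv_right.mul_pow, inv_pow, inv_one,
    pow_eq_self_of_mul_self_eq_one hc hm] at this
  exact this.symm

end OddPow

namespace ZMod

variable {m : ℕ} [NeZero m] {E : Type*}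

theorem pow_val_add [Monoid E] {a : E} (ha : a ^ m = 1) (i j : ZMod m) :
    a ^ (i + j).val = a ^ i.val * a ^ j.val := by
  rw [ZMod.val_add, ← pow_eq_pow_mod _ ha, pow_add]

theorem inv_pow_val [Group E] {a : E} (ha : a ^ m = 1) (i : ZMod m) :
    a⁻¹ ^ i.val = a ^ (-i).val := by
  rw [inv_pow, inv_eq_iff_mul_eq_one, ← pow_val_add ha, add_neg_cancel, ZMod.val_zero, pow_zero]

end ZMod

/-- Normalized 2-cocycles for the trivial action of `G` on `M`. -/
structure NormCocycle (G M : Type*) [Group G] [CommGroup M] where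
  toFun : G → G → M
  map_one_one : toFun 1 1 = 1
  map_mul_mul : ∀ g h k, toFun g h * toFun (g * h) k = toFun g (h * k) * toFun h k

namespace NormCocycle

variable {G M : Type*} [Group G] [CommGroup M] (ψ : NormCocycle G M)

instance : CoeFun (NormCocycle G M) fun _ => G → G → M := ⟨toFun⟩

theorem map_one_left (g : G) : ψ 1 g = 1 := by
  simpa [ψ.map_one_one] using ψ.map_mul_mul 1 1 g

theorem map_one_right (g : G) : ψ g 1 = 1 := by
  simpa [ψ.map_one_one] using ψ.map_mul_mul g 1 1

@[ext]
structure Ext (ψ : NormCocycle G M) where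
  base : G
  fiber : M

instance : Group ψ.Ext where
  mul x y := ⟨x.base * y.base, ψ x.base y.base * x.fiber * y.fiber⟩
  one := ⟨1, 1⟩
  inv x := ⟨x.base⁻¹, (ψ x.base⁻¹ x.base * x.fiber)⁻¹⟩
  mul_assoc x y z := by
    refine Ext.ext (mul_assoc _ _ _) ?_
    show ψ (x.base * y.base) z.base * (ψ x.base y.base * x.fiber * y.fiber) * z.fiber =
      ψ x.base (y.base * z.base) * x.fiber * (ψ y.base z.base * y.fiber * z.fiber)
    calc _ = ψ x.base y.base * ψ (x.base * y.base) z.base * (x.fiber * y.fiber * z.fiber) := by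
          ac_rfl
      _ = ψ x.base (y.base * z.base) * ψ y.base z.base * (x.fiber * y.fiber * z.fiber) := by
          rw [ψ.map_mul_mul]
      _ = _ := by ac_rfl
  one_mul x := Ext.ext (one_mul _) (by
    show ψ 1 x.base * 1 * x.fiber = x.fiber
    rw [map_one_left, one_mul, one_mul])
  mul_one x := Ext.ext (mul_one _) (by
    show ψ x.base 1 * x.fiber * 1 = x.fiber
    rw [map_one_right, one_mul, mul_one])
  inv_mul_cancel x := Ext.ext (inv_mul_cancel _) (by
    show ψ x.base⁻¹ x.base * (ψ x.base⁻¹ x.base * x.fiber)⁻¹ * x.fiber = 1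
    rw [mul_inv, mul_inv_cancel_left, inv_mul_cancel])

variable {ψ}

@[simp] theorem mul_base (x y : ψ.Ext) : (x * y).base = x.base * y.base := rfl

@[simp] theorem mul_fiber (x y : ψ.Ext) :
    (x * y).fiber = ψ x.base y.base * x.fiber * y.fiber := rfl

@[simp] theorem one_fiber : (1 : ψ.Ext).fiber = 1 := rfl

variable (ψ)

def rightHom : ψ.Ext →* G where
  toFun := Ext.base
  map_one' := rfl
  map_mul' _ _ := rfl

def inl : M →* ψ.Ext where
  toFun z := ⟨1, z⟩
  map_one' := rfl
  map_mul' z w := Ext.ext (one_mul 1).symm (by simp [ψ.map_one_one])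

variable {ψ}

@[simp] theorem rightHom_apply (x : ψ.Ext) : ψ.rightHom x = x.base := rfl

theorem rightHom_surjective : Function.Surjective ψ.rightHom :=
  fun g => ⟨⟨g, 1⟩, rfl⟩

theorem inl_mul (z : M) (x : ψ.Ext) : ψ.inl z * x = ⟨x.base, z * x.fiber⟩ :=
  Ext.ext (one_mul _) (by simp [inl, map_one_left])

theorem commute_inl (z : M) (x : ψ.Ext) : Commute (ψ.inl z) x :=
  Ext.ext (by simp [inl]) (by simp [inl, map_one_left, map_one_right, mul_comm])

theorem inl_fiber_of_base_eq_one {x : ψ.Ext} (hx : x.base = 1) : ψ.inl x.fiber = x :=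
  Ext.ext hx.symm rfl

theorem apply_eq_of_section (Φ : G → ψ.Ext) (hΦ : ∀ g, (Φ g).base = g) (c : G → G → M)
    (hc : ∀ g h, Φ g * Φ h = ψ.inl (c g h) * Φ (g * h)) (g h : G) :
    ψ g h = c g h * (Φ (g * h)).fiber / ((Φ g).fiber * (Φ h).fiber) := by
  have hfiber := congrArg Ext.fiber (hc g h)
  rw [inl_mul, mul_fiber, hΦ, hΦ] at hfiber
  rw [eq_div_iff_mul_eq', ← mul_assoc]
  exact hfiber

section OfInt

variable (ψ : G → G → ℤ) (hval : ∀ g h, ψ g h = 1 ∨ ψ g h = -1) (hnorm : ψ 1 1 = 1)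
  (hcoc : ∀ g h k, ψ g h * ψ (g * h) k = ψ g (h * k) * ψ h k)

noncomputable def ofInt : NormCocycle G ℤˣ where
  toFun g h := (Int.isUnit_iff.mpr (hval g h)).unit
  map_one_one := Units.ext (by simpa using hnorm)
  map_mul_mul g h k := Units.ext (by simpa using hcoc g h k)

@[simp] theorem coe_ofInt_apply (g h : G) : (ofInt ψ hval hnorm hcoc g h : ℤ) = ψ g h :=
  IsUnit.unit_spec _

end OfInt

end NormCocycle

namespace DihedralGroup

variable {m : ℕ}

/-- For `t = -1` this is the cocycle `β` with matrix `[[J, J], [J, -J]]`. -/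
def reflectionCocycle {M : Type*} [One M] (t : M) : DihedralGroup m → DihedralGroup m → M
  | sr _, sr _ => t
  | _, _ => 1

section reflectionCocycle

variable {M : Type*} [One M] (t : M)

@[simp] theorem reflectionCocycle_r_left (i : ZMod m) (h : DihedralGroup m) :
    reflectionCocycle t (r i) h = 1 := rfl

@[simp] theorem reflectionCocycle_sr_r (i j : ZMod m) : reflectionCocycle t (sr i) (r j) = 1 :=
  rfl

@[simp] theorem reflectionCocycle_sr_sr (i j : ZMod m) : reflectionCocycle t (sr i) (sr j) = t :=
  rfl

@[simp] theorem reflectionCocycle_one (g h : DihedralGroup m) :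
    reflectionCocycle (1 : M) g h = 1 := by
  rcases g with i | i <;> rcases h with j | j <;> rfl

theorem apply_reflectionCocycle {N : Type*} [One N] (f : M → N) (hf : f 1 = 1)
    (g h : DihedralGroup m) : f (reflectionCocycle t g h) = reflectionCocycle (f t) g h := by
  rcases g with i | i <;> rcases h with j | j <;> simp [hf]

end reflectionCocycle

variable {E : Type*} [Group E]

theorem exists_lift (hm : Odd m) (π : E →* DihedralGroup m) (hπ : Function.Surjective π)
    (hker : ∀ z, π z = 1 → z * z = 1 ∧ ∀ x, Commute z x) :
    ∃ a b : E, π a = r 1 ∧ π b = sr 0 ∧ a ^ m = 1 ∧ b * a⁻¹ = a * b := by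
  obtain ⟨a₀, ha₀⟩ := hπ (r 1)
  obtain ⟨b, hb⟩ := hπ (sr 0)
  obtain ⟨hc_sq, hc_central⟩ := hker (a₀ ^ m) (by rw [map_pow, ha₀, r_one_pow_n])
  set a := a₀ ^ m * a₀
  have ha : a ^ m = 1 := (hc_central a₀).mul_pow_eq_one hc_sq hm rfl
  have hπa : π a = r 1 := by rw [map_mul, map_pow, ha₀, r_one_pow_n, one_mul]
  obtain ⟨hη_sq, hη_central⟩ := hker (b * a * b⁻¹ * a) (by simp [hπa, hb, sr_mul_r, sr_mul_sr])
  have hconj : b * a * b⁻¹ = (b * a * b⁻¹ * a) * a⁻¹ := by group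
  rw [eq_one_of_conj_eq_mul_inv hm ha (hη_central a) hη_sq hconj, one_mul] at hconj
  refine ⟨a, b, hπa, hb, ha, ?_⟩
  calc b * a⁻¹ = (b * a * b⁻¹)⁻¹ * b := by group
    _ = a * b := by rw [hconj, inv_inv]

def sectionOf (a b : E) : DihedralGroup m → E
  | r i => a ^ i.val
  | sr i => b * a ^ i.val

variable [NeZero m] {a b : E}

theorem map_sectionOf (π : E →* DihedralGroup m) (hπa : π a = r 1) (hπb : π b = sr 0)
    (g : DihedralGroup m) : π (sectionOf a b g) = g := by
  cases g <;> simp [sectionOf, hπa, hπb, sr_mul_r]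

theorem sectionOf_mul_sectionOf (ha : a ^ m = 1) (hab : b * a⁻¹ = a * b) (g h : DihedralGroup m) :
    sectionOf a b g * sectionOf a b h = reflectionCocycle (b * b) g h * sectionOf a b (g * h) := by
  have hcomm (i : ZMod m) : a ^ i.val * b = b * a ^ (-i).val := by
    rw [← ZMod.inv_pow_val ha, SemiconjBy.pow_right hab i.val]
  rcases g with i | i <;> rcases h with j | j <;>
    simp only [sectionOf, r_mul_r, r_mul_sr, sr_mul_r, sr_mul_sr, reflectionCocycle_r_left,
      reflectionCocycle_sr_r, reflectionCocycle_sr_sr, one_mul, ZMod.pow_val_add ha]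
  · rw [← mul_assoc, hcomm, mul_assoc, ← ZMod.pow_val_add ha, neg_add_eq_sub]
  · rw [mul_assoc]
  · rw [mul_assoc, ← mul_assoc _ b, hcomm, mul_assoc, ← ZMod.pow_val_add ha, neg_add_eq_sub,
      mul_assoc]

theorem sum_eq_sum_r_add_sum_sr {R : Type*} [AddCommMonoid R] (F : DihedralGroup m → R) :
    ∑ g, F g = ∑ i, F (r i) + ∑ i, F (sr i) := by
  rw [← equivSum.symm.sum_comp, Fintype.sum_sum_type]
  rfl

theorem commute_transpose_of_reflectionCocycle {R : Type*} [CommRing R]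
    (f : DihedralGroup m → R) :
    Commute (of fun g h => reflectionCocycle (-1 : R) g h * f (g * h))
      (of fun g h => reflectionCocycle (-1 : R) g h * f (g * h))ᵀ := by
  refine Matrix.ext fun g h => ?_
  -- On the mixed entries (a rotation and a reflection) both sides vanish: the two sums cancel
  -- after reindexing.
  simp only [mul_apply, transpose_apply, of_apply, sum_eq_sum_r_add_sum_sr]
  rcases g with i | i <;> rcases h with j | j <;>
    simp only [r_mul_r, r_mul_sr, sr_mul_r, sr_mul_sr, reflectionCocycle_r_left,
      reflectionCocycle_sr_r, reflectionCocycle_sr_sr, one_mul, mul_neg, neg_mul,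
      neg_neg, Finset.sum_neg_distrib]
  · congr 1
    · simp only [add_comm i, add_comm j]
    · exact Fintype.sum_equiv (Equiv.subRight (i + j)) _ _ fun l => by
        simp only [Equiv.subRight_apply]; ring_nf
  · rw [add_neg_eq_zero.mpr, add_neg_eq_zero.mpr]
    · exact Fintype.sum_equiv (Equiv.subLeft (j - i)) _ _ fun l => by
        simp only [Equiv.subLeft_apply]; ring_nf
    · exact Fintype.sum_equiv (Equiv.addRight (i + j)) _ _ fun l => by
        simp only [Equiv.coe_addRight]; ring_nf
  · rw [add_neg_eq_zero.mpr, add_neg_eq_zero.mpr]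
    · exact Fintype.sum_equiv (Equiv.subLeft (i - j)) _ _ fun l => by
        simp only [Equiv.subLeft_apply]; ring_nf
    · exact Fintype.sum_equiv (Equiv.addRight (i + j)) _ _ fun l => by
        simp only [Equiv.coe_addRight]; ring_nf
  · congr 1
    · exact Fintype.sum_equiv (Equiv.neg _) _ _ fun l => by
        simp only [Equiv.neg_apply]; ring_nf
    · exact Fintype.sum_equiv (Equiv.subLeft (i + j)) _ _ fun l => by
        simp only [Equiv.subLeft_apply]; ring_nf

end DihedralGroup

namespace NormCocycle

open DihedralGroup

theorem exists_eq_reflectionCocycle_mul {m : ℕ} [NeZero m] (hm : Odd m)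
    (ψ : NormCocycle (DihedralGroup m) ℤˣ) :
    ∃ (t : ℤˣ) (φ : DihedralGroup m → ℤˣ), φ 1 = 1 ∧
      ∀ g h, ψ g h = reflectionCocycle t g h * (φ g * φ h * φ (g * h)) := by
  obtain ⟨a, b, hπa, hπb, ha, hab⟩ := exists_lift hm ψ.rightHom rightHom_surjective
    fun z hz => by
      rw [← inl_fiber_of_base_eq_one hz]
      exact ⟨by rw [← map_mul, Int.units_mul_self, map_one], commute_inl _⟩
  have hbb : ψ.inl (b * b).fiber = b * b := by
    refine inl_fiber_of_base_eq_one ?_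
    rw [← rightHom_apply, map_mul, hπb, sr_mul_self]
  refine ⟨(b * b).fiber, fun g => (sectionOf a b g).fiber, ?_, fun g h => ?_⟩
  · show (a ^ (0 : ZMod m).val).fiber = 1
    rw [ZMod.val_zero, pow_zero, one_fiber]
  · rw [apply_eq_of_section (sectionOf a b) (map_sectionOf ψ.rightHom hπa hπb)
      (reflectionCocycle (b * b).fiber) (fun g h => ?_) g h, Int.units_div_eq_mul]
    · dsimp only
      ac_rfl
    · rw [sectionOf_mul_sectionOf ha hab, apply_reflectionCocycle _ _ (map_one _), hbb]

end NormCocycle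

theorem Commute.diagonal_mul_mul_diagonal {n R : Type*} [Fintype n] [DecidableEq n] [CommRing R]
    {N : Matrix n n R} (hN : Commute N Nᵀ) {d : n → R} (hd : ∀ i, d i * d i = 1) :
    Commute (diagonal d * N * diagonal d) (diagonal d * N * diagonal d)ᵀ := by
  have hdd : diagonal d * diagonal d = 1 := by simp only [diagonal_mul_diagonal, hd, diagonal_one]
  simp only [transpose_mul, diagonal_transpose, Commute, SemiconjBy, mul_assoc]
  simp only [← mul_assoc (diagonal d) (diagonal d), hdd, one_mul]
  rw [← mul_assoc N, hN.eq, mul_assoc]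

open DihedralGroup in
/-- any normalized ±1 cocycle on the dihedral group of order
`2m`, `m` odd, which is not a coboundary, has a normal cocyclic matrix. -/
theorem stmt_18 (m : ℕ) (hm : Odd m) [NeZero m]
    (ψ : DihedralGroup m → DihedralGroup m → ℤ)
    (hval : ∀ g h, ψ g h = 1 ∨ ψ g h = -1)
    (hnorm : ψ 1 1 = 1)
    (hcoc : ∀ g h k, ψ g h * ψ (g * h) k = ψ g (h * k) * ψ h k)
    (hnotcob : ¬ ∃ φ : DihedralGroup m → ℤ, φ 1 = 1 ∧
      (∀ g, φ g = 1 ∨ φ g = -1) ∧ ∀ g h, ψ g h = φ g * φ h * φ (g * h)) :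
    (Matrix.of ψ) * (Matrix.of ψ)ᵀ = (Matrix.of ψ)ᵀ * (Matrix.of ψ) := by
  obtain ⟨t, φ, hφ1, hψ⟩ :=
    (NormCocycle.ofInt ψ hval hnorm hcoc).exists_eq_reflectionCocycle_mul hm
  have hψℤ (g h) : ψ g h = reflectionCocycle (t : ℤ) g h * (φ g * φ h * φ (g * h)) := by
    rw [← NormCocycle.coe_ofInt_apply ψ hval hnorm hcoc, hψ, Units.val_mul,
      apply_reflectionCocycle _ _ Units.val_one]
    push_cast
    rfl
  rcases Int.units_eq_one_or t with rfl | rfl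
  · refine absurd ⟨fun g => φ g, by simp [hφ1], fun g => Int.isUnit_iff.mp (φ g).isUnit, ?_⟩
      hnotcob
    simpa using hψℤ
  · have hM : Matrix.of ψ = diagonal (fun g => (φ g : ℤ)) *
        of (fun g h => reflectionCocycle (-1 : ℤ) g h * φ (g * h)) *
        diagonal (fun g => (φ g : ℤ)) := by
      ext g h
      simp only [mul_diagonal, diagonal_mul, of_apply, hψℤ, Units.val_neg, Units.val_one]
      ring
    rw [hM]
    exact (commute_transpose_of_reflectionCocycle fun g => (φ g : ℤ)).diagonal_mul_mul_diagonal
      fun g => Int.units_coe_mul_self (φ g)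
end

section
/- For any finite group G with elements g_1,...,g_n and any normalized {±1}-valued 2-cocycle ψ on G, the Grammian of the cocyclic matrix M_ψ = [ψ(g_i,g_j)] satisfies (M_ψ M_ψᵀ)_{ij} = ψ(g_i g_j⁻¹, g_j) Σ_{g∈G} ψ(g_i g_j⁻¹, g) and (M_ψᵀ M_ψ)_{ij} = ψ(g_i, g_i⁻¹ g_j) Σ_{g∈G} ψ(g, g_i⁻¹ g_j). -/
/-!
Reindexing the sum `∑ₓ ψ(g, x) ψ(h, x)` by `x ↦ h x` (resp. `∑ₓ ψ(x, g) ψ(x, h)` by `x ↦ x g`),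
each summand becomes, by a single instance of the cocycle identity and `ψ² = 1`, the product of a
constant factor with one entry of a fixed row (resp. column) of `M_ψ`.
-/

open Matrix

section Cocycle

variable {G R : Type*} [Group G] [CommRing R] {ψ : G → G → R}

theorem cocycle_mul_right_eq (hsq : ∀ a b, ψ a b * ψ a b = 1)
    (hcoc : ∀ g h k, ψ g h * ψ (g * h) k = ψ g (h * k) * ψ h k) (a h x : G) :
    ψ (a * h) x * ψ h x = ψ a h * ψ a (h * x) := by
  linear_combination ψ a h * ψ h x * hcoc a h x - ψ (a * h) x * ψ h x * hsq a h
    + ψ a h * ψ a (h * x) * hsq h x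

theorem cocycle_mul_left_eq (hsq : ∀ a b, ψ a b * ψ a b = 1)
    (hcoc : ∀ g h k, ψ g h * ψ (g * h) k = ψ g (h * k) * ψ h k) (x g b : G) :
    ψ x g * ψ x (g * b) = ψ g b * ψ (x * g) b := by
  linear_combination -(ψ g b * ψ x g) * hcoc x g b - ψ x g * ψ x (g * b) * hsq g b
    + ψ g b * ψ (x * g) b * hsq x g

variable [Fintype G]

theorem cocyclic_mul_transpose_apply (hsq : ∀ a b, ψ a b * ψ a b = 1)
    (hcoc : ∀ g h k, ψ g h * ψ (g * h) k = ψ g (h * k) * ψ h k) (g h : G) :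
    (of ψ * (of ψ)ᵀ) g h = ψ (g * h⁻¹) h * ∑ x, ψ (g * h⁻¹) x := by
  rw [← Equiv.sum_comp (Equiv.mulLeft h), Finset.mul_sum, mul_apply]
  refine Finset.sum_congr rfl fun x _ => ?_
  simpa using cocycle_mul_right_eq hsq hcoc (g * h⁻¹) h x

theorem cocyclic_transpose_mul_apply (hsq : ∀ a b, ψ a b * ψ a b = 1)
    (hcoc : ∀ g h k, ψ g h * ψ (g * h) k = ψ g (h * k) * ψ h k) (g h : G) :
    ((of ψ)ᵀ * of ψ) g h = ψ g (g⁻¹ * h) * ∑ x, ψ x (g⁻¹ * h) := by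
  rw [← Equiv.sum_comp (Equiv.mulRight g), Finset.mul_sum, mul_apply]
  refine Finset.sum_congr rfl fun x _ => ?_
  simpa using cocycle_mul_left_eq hsq hcoc x g (g⁻¹ * h)

end Cocycle

theorem stmt_19_general (G : Type*) [Group G] [Fintype G]
    (ψ : G → G → ℤ) (hval : ∀ g h, ψ g h = 1 ∨ ψ g h = -1)
    (hcoc : ∀ g h k, ψ g h * ψ (g * h) k = ψ g (h * k) * ψ h k) :
    ∀ g h : G,
      ((Matrix.of ψ) * (Matrix.of ψ)ᵀ) g h
          = ψ (g * h⁻¹) h * ∑ x : G, ψ (g * h⁻¹) x ∧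
      ((Matrix.of ψ)ᵀ * (Matrix.of ψ)) g h
          = ψ g (g⁻¹ * h) * ∑ x : G, ψ x (g⁻¹ * h) := by
  have hsq : ∀ a b, ψ a b * ψ a b = 1 := fun a b => by
    rcases hval a b with h | h <;> simp [h]
  exact fun g h => ⟨cocyclic_mul_transpose_apply hsq hcoc g h,
    cocyclic_transpose_mul_apply hsq hcoc g h⟩

/-- Grammian entries of a cocyclic matrix. For a normalized ±1
cocycle `ψ` on a finite group `G`,
`(M_ψ M_ψᵀ)_{g,h} = ψ(gh⁻¹, h) Σ_x ψ(gh⁻¹, x)` and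
`(M_ψᵀ M_ψ)_{g,h} = ψ(g, g⁻¹h) Σ_x ψ(x, g⁻¹h)`. -/
theorem stmt_19 (G : Type*) [Group G] [Fintype G] [DecidableEq G]
    (ψ : G → G → ℤ) (hval : ∀ g h, ψ g h = 1 ∨ ψ g h = -1)
    (hnorm : ψ 1 1 = 1)
    (hcoc : ∀ g h k, ψ g h * ψ (g * h) k = ψ g (h * k) * ψ h k) :
    ∀ g h : G,
      ((Matrix.of ψ) * (Matrix.of ψ)ᵀ) g h
          = ψ (g * h⁻¹) h * ∑ x : G, ψ (g * h⁻¹) x ∧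
      ((Matrix.of ψ)ᵀ * (Matrix.of ψ)) g h
          = ψ g (g⁻¹ * h) * ∑ x : G, ψ x (g⁻¹ * h) :=
  stmt_19_general G ψ hval hcoc
end
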